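/- arXiv:2412.17646 — 12 statements merged into one kernel-verified Lean document; each statement's English description precedes it below -/
import Mathlib

section
/- Let g(x) = 1 - e^{-x} and let g_k denote the limit of the k-fold composition of g applied to x as x → ∞ (equivalently, g_1 = 1 and g_{k+1} = 1 - e^{-g_k}). Then for all k ≥ 1, 1/k ≤ g_k ≤ 3/k. -/
lemma pade_aux : ∀ x : ℝ, 0 ≤ x → 2 - x ≤ (2 + x) * Real.exp (-x) := by
  intro x hx
  have h : MonotoneOn (fun y : ℝ => (2 + y) * Real.exp (-y) - (2 - y)) (Set.Ici 0) := by
    apply monotoneOn_of_deriv_nonneg (convex_Ici 0)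
    · fun_prop
    · fun_prop
    · intro y hy
      rw [interior_Ici] at hy
      have hd : HasDerivAt (fun y : ℝ => (2 + y) * Real.exp (-y) - (2 - y))
          (1 * Real.exp (-y) + (2 + y) * (Real.exp (-y) * (-1)) - (-1)) y := by
        have h1 : HasDerivAt (fun y : ℝ => Real.exp (-y)) (Real.exp (-y) * (-1)) y :=
          (Real.hasDerivAt_exp (-y)).comp y ((hasDerivAt_id y).neg)
        have h2 : HasDerivAt (fun y : ℝ => (2 + y)) 1 y := by
          simpa using (hasDerivAt_id y).const_add 2
        exact (h2.mul h1).sub (((hasDerivAt_id y).const_sub 2))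
      rw [hd.deriv]
      have hy0 : (0:ℝ) ≤ y := le_of_lt hy
      have he : (1 + y) * Real.exp (-y) ≤ 1 := by
        have h3 : 1 + y ≤ Real.exp y := by linarith [Real.add_one_le_exp y]
        have h4 : Real.exp (-y) * Real.exp y = 1 := by
          rw [← Real.exp_add]; simp
        nlinarith [Real.exp_pos (-y)]
      nlinarith [Real.exp_pos (-y)]
  have := h (Set.self_mem_Ici) (Set.mem_Ici.2 hx) hx
  simp only at this
  simp at this
  linarith

theorem g_seq_bounds (g : ℕ → ℝ) (hg1 : g 1 = 1)
    (hgrec : ∀ k ≥ 1, g (k + 1) = 1 - Real.exp (-(g k))) :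
    ∀ k : ℕ, 1 ≤ k → 1 / (k : ℝ) ≤ g k ∧ g k ≤ 3 / (k : ℝ) := by
  intro k hk
  induction k, hk using Nat.le_induction with
  | base => simp [hg1]
  | succ k hk ih =>
    obtain ⟨ih1, ih2⟩ := ih
    have hkr : (1:ℝ) ≤ (k:ℝ) := by exact_mod_cast hk
    have hkpos : (0:ℝ) < (k:ℝ) := by linarith
    set x := g k with hxdef
    have hxpos : 0 < x := lt_of_lt_of_le (by positivity) ih1
    have hx3 : x * k ≤ 3 := by
      rw [le_div_iff₀ hkpos] at ih2; linarith
    have hx1 : 1 ≤ x * k := by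
      rw [div_le_iff₀ hkpos] at ih1; linarith
    have hrec := hgrec k hk
    set E := Real.exp (-x) with hEdef
    have hE1 : (1 + x) * E ≤ 1 := by
      have h3 : 1 + x ≤ Real.exp x := by linarith [Real.add_one_le_exp x]
      have h4 : E * Real.exp x = 1 := by rw [hEdef, ← Real.exp_add]; simp
      nlinarith [Real.exp_pos (-x)]
    have hE2 : 2 - x ≤ (2 + x) * E := pade_aux x hxpos.le
    have hEpos : 0 < E := Real.exp_pos _
    have hcast : ((k + 1 : ℕ) : ℝ) = (k:ℝ) + 1 := by push_cast; ring
    constructor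
    · rw [hrec, hcast, div_le_iff₀ (by linarith)]
      nlinarith
    · rw [hrec, hcast, le_div_iff₀ (by linarith)]
      nlinarith
end

section
/- Let g_1 = 1 and g_{j+1} = 1 - exp(-g_j). For any j ≥ 1, any real λ with 0 ≤ λ ≤ n, and positive integer n: the sum over i from 0 to n of C(n,i) (λ/n)^i (1-λ/n)^{n-i} exp(-i g_j) is at most exp(-λ g_{j+1}). -/
/-! The sum is the Laplace transform of `Binomial(n, p)` at `x = g j`, namely
`(1 - p (1 - e^{-x}))^n`, and `1 - t ≤ e^{-t}` bounds it by `exp (-n p (1 - e^{-x}))`;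
with `p = λ / n` this is `exp (-λ g (j+1))` by the recursion. -/

open Real Finset

theorem sum_binomial_mul_exp_neg_mul (n : ℕ) (p x : ℝ) :
    ∑ i ∈ range (n + 1),
      (n.choose i : ℝ) * p ^ i * (1 - p) ^ (n - i) * exp (-(i : ℝ) * x)
      = (1 - p * (1 - exp (-x))) ^ n := by
  have hexp (i : ℕ) : exp (-(i : ℝ) * x) = exp (-x) ^ i := by
    rw [← exp_nat_mul]; ring_nf
  rw [show 1 - p * (1 - exp (-x)) = p * exp (-x) + (1 - p) by ring, add_pow]
  refine sum_congr rfl fun i _ => ?_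
  rw [hexp, mul_pow]; ring

theorem sum_binomial_mul_exp_neg_mul_le (n : ℕ) {p : ℝ} (hp0 : 0 ≤ p) (hp1 : p ≤ 1) (x : ℝ) :
    ∑ i ∈ range (n + 1),
      (n.choose i : ℝ) * p ^ i * (1 - p) ^ (n - i) * exp (-(i : ℝ) * x)
      ≤ exp (-(n * p) * (1 - exp (-x))) := by
  have hbase : 0 ≤ 1 - p * (1 - exp (-x)) := by nlinarith [exp_pos (-x)]
  calc ∑ i ∈ range (n + 1),
          (n.choose i : ℝ) * p ^ i * (1 - p) ^ (n - i) * exp (-(i : ℝ) * x)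
      = (1 - p * (1 - exp (-x))) ^ n := sum_binomial_mul_exp_neg_mul n p x
    _ ≤ exp (-(p * (1 - exp (-x)))) ^ n := pow_le_pow_left₀ hbase (one_sub_le_exp_neg _) n
    _ = exp (-(n * p) * (1 - exp (-x))) := by rw [← exp_nat_mul]; ring_nf

theorem binomial_exp_moment_upper_general (n : ℕ) (hn : 0 < n) (lam : ℝ)
    (hlam0 : 0 ≤ lam) (hlamn : lam ≤ n)
    (g : ℕ → ℝ)
    (hgrec : ∀ k ≥ 1, g (k + 1) = 1 - Real.exp (-(g k)))
    (j : ℕ) (hj : 1 ≤ j) :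
    ∑ i ∈ Finset.range (n + 1),
      (n.choose i : ℝ) * (lam / n) ^ i * (1 - lam / n) ^ (n - i) *
        Real.exp (-(i : ℝ) * g j)
      ≤ Real.exp (-lam * g (j + 1)) := by
  have hn' : (n : ℝ) ≠ 0 := by positivity
  have hp0 : 0 ≤ lam / n := by positivity
  have hp1 : lam / n ≤ 1 := div_le_one_of_le₀ hlamn n.cast_nonneg
  calc _ ≤ exp (-(n * (lam / n)) * (1 - exp (-g j))) :=
        sum_binomial_mul_exp_neg_mul_le n hp0 hp1 (g j)
    _ = exp (-lam * g (j + 1)) := by rw [mul_div_cancel₀ lam hn', hgrec j hj]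

theorem binomial_exp_moment_upper (n : ℕ) (hn : 0 < n) (lam : ℝ)
    (hlam0 : 0 ≤ lam) (hlamn : lam ≤ n)
    (g : ℕ → ℝ) (hg1 : g 1 = 1)
    (hgrec : ∀ k ≥ 1, g (k + 1) = 1 - Real.exp (-(g k)))
    (j : ℕ) (hj : 1 ≤ j) :
    ∑ i ∈ Finset.range (n + 1),
      (n.choose i : ℝ) * (lam / n) ^ i * (1 - lam / n) ^ (n - i) *
        Real.exp (-(i : ℝ) * g j)
      ≤ Real.exp (-lam * g (j + 1)) :=
  binomial_exp_moment_upper_general n hn lam hlam0 hlamn g hgrec j hj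
end

section
/- Let g_1 = 1, g_{j+1} = 1 - exp(-g_j). For any j ≥ 1, constants c_1 ≥ 1, c_2 ≥ 0, and 0 ≤ λ ≤ n: the sum over i from 0 to n of C(n,i)(λ/n)^i(1-λ/n)^{n-i} exp(-i g_j) (1 - (c_1 i^2 + c_2 i)/n · Σ_{m=1}^{j} g_m^2) is at least exp(-λ g_{j+1}) (1 - (c_1 λ^2 + (c_1 + c_2) λ)/n · Σ_{m=1}^{j+1} g_m^2). -/
/-! With `q = exp (-g j)`, the summand weights are the terms of the binomial expansion of
`(x + y) ^ n` for `x = λ q / n`, `y = 1 - λ / n`, and `x + y = 1 - λ g (j + 1) / n` because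
`g (j + 1) = 1 - q`. Splitting `i ^ 2 = i (i - 1) + i`, the sum becomes a combination of the
factorial moments `∑ C(n, i) i^(k) x^i y^(n-i) = n^(k) x^k (x + y)^(n-k)`, `k = 0, 1, 2`.
From `1 + t ≤ exp t` and Bernoulli's inequality, the `k = 0` term is at least
`exp (-λ g (j + 1)) (1 - (λ g (j + 1)) ^ 2 / n)` and the `k = 1, 2` terms are at most
`λ ^ k exp (-λ g (j + 1))`. What is left over is `g (j + 1) ^ 2 / n` times
`(c₁ - 1) λ ^ 2 + (c₁ + c₂) λ`, which is nonnegative because `c₁ ≥ 1`. -/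

open Finset Real

theorem sum_choose_mul_descFactorial_mul_pow {R : Type*} [CommSemiring R] (x y : R) (k n : ℕ) :
    ∑ i ∈ range (n + 1), (n.choose i : R) * (i.descFactorial k : R) * x ^ i * y ^ (n - i) =
      (n.descFactorial k : R) * x ^ k * (x + y) ^ (n - k) := by
  induction k generalizing n with
  | zero =>
    simp only [Nat.descFactorial_zero, Nat.cast_one, mul_one, pow_zero, one_mul, Nat.sub_zero,
      add_pow]
    exact sum_congr rfl fun _ _ => by ring
  | succ k ih =>
    cases n with
    | zero => simp
    | succ n =>
      have hchoose (i : ℕ) : ((n + 1).choose (i + 1) : R) * (i + 1) = (n + 1) * n.choose i := by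
        have := congrArg (Nat.cast : ℕ → R) (Nat.add_one_mul_choose_eq n i).symm
        push_cast at this
        exact this
      rw [sum_range_succ']
      simp only [Nat.zero_descFactorial_succ, Nat.cast_zero, mul_zero, zero_mul, add_zero,
        Nat.succ_descFactorial_succ, Nat.add_sub_add_right]
      calc ∑ i ∈ range (n + 1), ((n + 1).choose (i + 1) : R) * ↑((i + 1) * i.descFactorial k) *
              x ^ (i + 1) * y ^ (n - i)
          = (n + 1) * x *
              ∑ i ∈ range (n + 1), (n.choose i : R) * i.descFactorial k * x ^ i * y ^ (n - i) := by
            rw [mul_sum]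
            refine sum_congr rfl fun i _ => ?_
            rw [Nat.cast_mul, Nat.cast_add_one, ← mul_assoc, hchoose]
            ring
        _ = _ := by rw [ih]; push_cast; ring

theorem sum_choose_mul_pow_mul_one_sub_quadratic {R : Type*} [CommRing R] (x y a b : R) (n : ℕ) :
    ∑ i ∈ range (n + 1), (n.choose i : R) * x ^ i * y ^ (n - i) * (1 - (a * i ^ 2 + b * i)) =
      (x + y) ^ n - a * ((n.descFactorial 2 : R) * x ^ 2 * (x + y) ^ (n - 2))
        - (a + b) * ((n.descFactorial 1 : R) * x ^ 1 * (x + y) ^ (n - 1)) := by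
  have hsq (i : ℕ) : (i : R) ^ 2 = i.descFactorial 2 + i.descFactorial 1 := by
    rw [Nat.cast_descFactorial_two, Nat.descFactorial_one]; ring
  rw [show (x + y) ^ n = (n.descFactorial 0 : R) * x ^ 0 * (x + y) ^ (n - 0) by simp,
    ← sum_choose_mul_descFactorial_mul_pow x y 0, ← sum_choose_mul_descFactorial_mul_pow x y 1,
    ← sum_choose_mul_descFactorial_mul_pow x y 2, mul_sum, mul_sum, ← sum_sub_distrib,
    ← sum_sub_distrib]
  refine sum_congr rfl fun i _ => ?_
  rw [hsq, Nat.descFactorial_zero, Nat.descFactorial_one]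
  ring

theorem descFactorial_mul_pow_mul_pow_le {n k : ℕ} {p q : ℝ} (hp₀ : 0 ≤ p) (hp₁ : p ≤ 1)
    (hq₀ : 0 ≤ q) (hq₁ : q ≤ 1) :
    (n.descFactorial k : ℝ) * (p * q) ^ k * (p * q + (1 - p)) ^ (n - k) ≤
      (n * p) ^ k * exp (-(n * p * (1 - q))) := by
  rcases lt_or_ge n k with hnk | hkn
  · rw [Nat.descFactorial_eq_zero_iff_lt.2 hnk, Nat.cast_zero, zero_mul, zero_mul]
    positivity
  have hq : q ≤ exp (-(1 - q)) := by linarith [add_one_le_exp (-(1 - q))]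
  have hA : p * q + (1 - p) ≤ exp (-(p * (1 - q))) := by
    linarith [add_one_le_exp (-(p * (1 - q)))]
  have hexp : q ^ k * (p * q + (1 - p)) ^ (n - k) ≤ exp (-(n * p * (1 - q))) :=
    calc q ^ k * (p * q + (1 - p)) ^ (n - k)
        ≤ exp (-(1 - q)) ^ k * exp (-(p * (1 - q))) ^ (n - k) := by
          gcongr
      _ = exp (-((k + (n - k : ℕ) * p) * (1 - q))) := by
          rw [← exp_nat_mul, ← exp_nat_mul, ← exp_add]; ring_nf
      _ ≤ exp (-(n * p * (1 - q))) := by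
          rw [exp_le_exp, Nat.cast_sub hkn]
          nlinarith [mul_nonneg (mul_nonneg (Nat.cast_nonneg k : (0 : ℝ) ≤ k) (sub_nonneg.2 hp₁))
            (sub_nonneg.2 hq₁)]
  have hdesc : (n.descFactorial k : ℝ) ≤ (n : ℝ) ^ k := by
    exact_mod_cast Nat.descFactorial_le_pow n k
  calc (n.descFactorial k : ℝ) * (p * q) ^ k * (p * q + (1 - p)) ^ (n - k)
      = (n.descFactorial k * p ^ k) * (q ^ k * (p * q + (1 - p)) ^ (n - k)) := by ring
    _ ≤ (n ^ k * p ^ k) * exp (-(n * p * (1 - q))) := by gcongr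
    _ = (n * p) ^ k * exp (-(n * p * (1 - q))) := by ring

theorem exp_neg_mul_one_sub_mul_sq_le_one_sub_pow (n : ℕ) {t : ℝ} (ht₀ : 0 ≤ t) (ht₁ : t ≤ 1) :
    exp (-(n * t)) * (1 - n * t ^ 2) ≤ (1 - t) ^ n := by
  have hbernoulli : 1 - n * t ^ 2 ≤ (1 - t) ^ n * (1 + t) ^ n :=
    calc 1 - n * t ^ 2 = 1 + n * (-t ^ 2) := by ring
      _ ≤ (1 + -t ^ 2) ^ n := one_add_mul_le_pow (by nlinarith) n
      _ = (1 - t) ^ n * (1 + t) ^ n := by rw [← mul_pow]; ring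
  have hexp : (1 + t) ^ n ≤ exp (n * t) := by
    rw [exp_nat_mul]
    gcongr
    linarith [add_one_le_exp t]
  calc exp (-(n * t)) * (1 - n * t ^ 2)
      ≤ exp (-(n * t)) * ((1 - t) ^ n * exp (n * t)) := by
        gcongr
        exact hbernoulli.trans (mul_le_mul_of_nonneg_left hexp (pow_nonneg (by linarith) n))
    _ = (1 - t) ^ n := by
        rw [mul_left_comm, ← exp_add, neg_add_cancel, exp_zero, mul_one]

theorem le_sum_choose_mul_pow_mul_one_sub_quadratic {n : ℕ} {p q a b : ℝ} (hp₀ : 0 ≤ p)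
    (hp₁ : p ≤ 1) (hq₀ : 0 ≤ q) (hq₁ : q ≤ 1) (ha : 0 ≤ a) (hab : 0 ≤ a + b) :
    exp (-(n * p * (1 - q))) * (1 - n * (p * (1 - q)) ^ 2)
        - a * ((n * p) ^ 2 * exp (-(n * p * (1 - q))))
        - (a + b) * ((n * p) ^ 1 * exp (-(n * p * (1 - q)))) ≤
      ∑ i ∈ range (n + 1), (n.choose i : ℝ) * p ^ i * (1 - p) ^ (n - i) * q ^ i *
        (1 - (a * i ^ 2 + b * i)) := by
  have hsum := sum_choose_mul_pow_mul_one_sub_quadratic (p * q) (1 - p) a b n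
  have hA : p * q + (1 - p) = 1 - p * (1 - q) := by ring
  have h₀ := exp_neg_mul_one_sub_mul_sq_le_one_sub_pow n (t := p * (1 - q)) (by nlinarith)
    (by nlinarith)
  have h₁ := descFactorial_mul_pow_mul_pow_le (n := n) (k := 1) hp₀ hp₁ hq₀ hq₁
  have h₂ := descFactorial_mul_pow_mul_pow_le (n := n) (k := 2) hp₀ hp₁ hq₀ hq₁
  rw [hA] at hsum h₁ h₂
  rw [← mul_assoc] at h₀
  refine le_trans ?_ (hsum.symm.trans (sum_congr rfl fun i _ => by ring)).le
  gcongr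

theorem nonneg_of_eq_one_sub_exp_neg {g : ℕ → ℝ} (hg₁ : 0 ≤ g 1)
    (hgrec : ∀ k ≥ 1, g (k + 1) = 1 - exp (-g k)) {j : ℕ} (hj : 1 ≤ j) : 0 ≤ g j := by
  induction j, hj using Nat.le_induction with
  | base => exact hg₁
  | succ k hk ih =>
    rw [hgrec k hk, sub_nonneg, exp_le_one_iff, neg_nonpos]
    exact ih

theorem binomial_exp_moment_lower (n : ℕ) (hn : 0 < n) (lam : ℝ)
    (hlam0 : 0 ≤ lam) (hlamn : lam ≤ n)
    (c₁ c₂ : ℝ) (hc₁ : 1 ≤ c₁) (hc₂ : 0 ≤ c₂)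
    (g : ℕ → ℝ) (hg1 : g 1 = 1)
    (hgrec : ∀ k ≥ 1, g (k + 1) = 1 - Real.exp (-(g k)))
    (j : ℕ) (hj : 1 ≤ j) :
    ∑ i ∈ Finset.range (n + 1),
      (n.choose i : ℝ) * (lam / n) ^ i * (1 - lam / n) ^ (n - i) *
        Real.exp (-(i : ℝ) * g j) *
        (1 - (c₁ * (i : ℝ) ^ 2 + c₂ * i) / n * ∑ m ∈ Finset.Icc 1 j, (g m) ^ 2)
      ≥ Real.exp (-lam * g (j + 1)) *
        (1 - (c₁ * lam ^ 2 + (c₁ + c₂) * lam) / n * ∑ m ∈ Finset.Icc 1 (j + 1), (g m) ^ 2) := by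
  have hN : (n : ℝ) ≠ 0 := by positivity
  have hgj : 0 ≤ g j := nonneg_of_eq_one_sub_exp_neg (hg1 ▸ zero_le_one) hgrec hj
  set q := exp (-g j)
  set S := ∑ m ∈ Icc 1 j, g m ^ 2
  have hS : 0 ≤ S := sum_nonneg fun m _ => sq_nonneg (g m)
  have hmain := le_sum_choose_mul_pow_mul_one_sub_quadratic (n := n) (a := c₁ * S / n)
    (b := c₂ * S / n) (div_nonneg hlam0 n.cast_nonneg) (div_le_one_of_le₀ hlamn n.cast_nonneg)
    (exp_pos _).le (exp_le_one_iff.2 (neg_nonpos.2 hgj)) (by positivity)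
    (by positivity)
  rw [mul_div_cancel₀ _ hN] at hmain
  rw [ge_iff_le, sum_Icc_succ_top (by omega : 1 ≤ j + 1), hgrec j hj, neg_mul]
  refine le_trans ?_ (hmain.trans_eq (sum_congr rfl fun i _ => ?_))
  · have hslack : 0 ≤ (1 - q) ^ 2 / n * ((c₁ - 1) * lam ^ 2 + (c₁ + c₂) * lam) := by
      have : 0 ≤ c₁ - 1 := by linarith
      positivity
    rw [← sub_nonneg]
    convert mul_nonneg (exp_pos (-(lam * (1 - q)))).le hslack using 1
    field_simp
    ring
  · rw [neg_mul, ← mul_neg, exp_nat_mul]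
    ring
end

section
/- Consider the Markov chain (Λ̃_k)_{k≥0} on the nonnegative integers with Λ̃_0 = N and Λ̃_{k+1} | Λ̃_k = λ distributed as Poisson(λ). Then Pr(Λ̃_k = 0) = exp(-N g_k), where g_1 = 1 and g_{j+1} = 1 - exp(-g_j). -/
/-!
Track the Laplace transform `L_k(c) = ∑_l p_k(l) e^{-c l}` of the chain rather than the single
probability `p_k(0)`. The Laplace transform of `Poisson(l)` at `c` is `e^{-l ρ(c)}` with
`ρ(c) = 1 - e^{-c}`, so one step of the chain gives `L_{k+1}(c) = L_k(ρ(c))` (Tonelli, all terms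
being nonnegative), whence `L_k(c) = e^{-N ρ^[k](c)}`. Finally `p_{k+1}(0) = L_k(1)` and
`ρ^[k](1) = g_{k+1}`.
-/

open Real
open scoped Nat

theorem HasSum.tsum_swap_of_nonneg {β γ : Type*} {f : β → γ → ℝ} {a : γ → ℝ} {s : ℝ}
    (hf : ∀ b c, 0 ≤ f b c) (hcol : ∀ c, HasSum (fun b ↦ f b c) (a c)) (ha : HasSum a s) :
    HasSum (fun b ↦ ∑' c, f b c) s := by
  have hsum : Summable fun q : γ × β ↦ f q.2 q.1 :=
    (summable_prod_of_nonneg fun q ↦ hf _ _).2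
      ⟨fun c ↦ (hcol c).summable, by simpa only [(hcol _).tsum_eq] using ha.summable⟩
  have hswap : HasSum (fun q : β × γ ↦ f q.1 q.2) s := by
    rw [← (hsum.hasSum.prod_fiberwise hcol).unique ha]
    exact (Equiv.prodComm β γ).hasSum_iff.mpr hsum.hasSum
  exact hswap.prod_fiberwise fun b ↦ (hswap.summable.prod_factor b).hasSum

theorem hasSum_poisson_mul_exp (r c : ℝ) :
    HasSum (fun j : ℕ ↦ exp (-r) * r ^ j / j ! * exp (-(c * j)))
      (exp (-(r * (1 - exp (-c))))) := by
  have h := (NormedSpace.expSeries_div_hasSum_exp (r * exp (-c))).mul_left (exp (-r))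
  rw [← exp_eq_exp_ℝ, ← exp_add, show -r + r * exp (-c) = -(r * (1 - exp (-c))) by ring] at h
  refine h.congr_fun fun j ↦ ?_
  rw [mul_pow, ← exp_nat_mul]
  ring_nf

theorem hasSum_poissonMixture_mul_exp {q : ℕ → ℝ} (hq : ∀ l, 0 ≤ q l) {c L : ℝ}
    (h : HasSum (fun l : ℕ ↦ q l * exp (-((1 - exp (-c)) * l))) L) :
    HasSum (fun j : ℕ ↦
      (∑' l : ℕ, q l * (exp (-(l : ℝ)) * (l : ℝ) ^ j / j !)) * exp (-(c * j))) L := by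
  simp_rw [← tsum_mul_right]
  refine HasSum.tsum_swap_of_nonneg (a := fun l : ℕ ↦ q l * exp (-(l * (1 - exp (-c)))))
    (fun j l ↦ by have := hq l; positivity) (fun l ↦ ?_) (h.congr_fun fun l ↦ by ring_nf)
  simpa only [mul_assoc] using (hasSum_poisson_mul_exp l c).mul_left (q l)

theorem hasSum_poissonChain_mul_exp {N : ℕ} {p : ℕ → ℕ → ℝ}
    (h0 : ∀ j, p 0 j = if j = N then 1 else 0)
    (hstep : ∀ k j, p (k + 1) j = ∑' l : ℕ, p k l * (exp (-(l : ℝ)) * (l : ℝ) ^ j / j !))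
    (k : ℕ) (c : ℝ) :
    HasSum (fun l : ℕ ↦ p k l * exp (-(c * l))) (exp (-(N * (fun c ↦ 1 - exp (-c))^[k] c))) := by
  have hnonneg : ∀ k l, 0 ≤ p k l := by
    intro k
    induction k with
    | zero => intro l; rw [h0]; positivity
    | succ k ih => exact fun j ↦ (hstep k j).symm ▸ tsum_nonneg fun l ↦ by have := ih l; positivity
  induction k generalizing c with
  | zero =>
    refine (hasSum_ite_eq N (exp (-(N * c)))).congr_fun fun l ↦ ?_
    by_cases hl : l = N <;> simp [h0, hl, mul_comm]
  | succ k ih =>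
    simpa only [hstep, Function.iterate_succ_apply] using
      hasSum_poissonMixture_mul_exp (hnonneg k) (ih _)

/-- The Poisson recursive training chain: `p k l` is the probability that the chain
is in state `l` at time `k`, started at the nonnegative integer `N`, with
transition kernel `Poisson(l)` from state `l`. -/
theorem poisson_chain_absorption (N : ℕ) (g : ℕ → ℝ) (hg1 : g 1 = 1)
    (hgrec : ∀ k ≥ 1, g (k + 1) = 1 - Real.exp (-(g k)))
    (p : ℕ → ℕ → ℝ)
    (h0 : ∀ j, p 0 j = if j = N then 1 else 0)
    (hstep : ∀ k j, p (k + 1) j =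
      ∑' l : ℕ, p k l * (Real.exp (-(l : ℝ)) * (l : ℝ) ^ j / (Nat.factorial j))) :
    ∀ k : ℕ, 1 ≤ k → p k 0 = Real.exp (-(N : ℝ) * g k) := by
  have hg : ∀ k, (fun c ↦ 1 - exp (-c))^[k] 1 = g (k + 1) := by
    intro k
    induction k with
    | zero => exact hg1.symm
    | succ k ih => rw [Function.iterate_succ_apply', ih, hgrec (k + 1) k.succ_pos]
  rintro (_ | k) hk
  · omega
  calc p (k + 1) 0 = ∑' l : ℕ, p k l * exp (-(1 * l)) := by simp [hstep]
    _ = exp (-(N : ℝ) * g (k + 1)) := by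
      rw [(hasSum_poissonChain_mul_exp h0 hstep k 1).tsum_eq, hg, neg_mul]
end

section
/- Consider the Markov chain (Λ̃_k) with Λ̃_{k+1} | Λ̃_k = λ ~ Poisson(λ), started at Λ̃_0 = N for a nonnegative integer N. Then exp(-3N/k) ≤ Pr(Λ̃_k = 0) and Pr(Λ̃_k = 0) ≤ exp(-N/k) for all k ≥ 1. -/
/-!
The generating function of Poisson(λ) is `exp (λ (s - 1)) = φ s ^ λ` with `φ s = exp (s - 1)`.
Conditioning on the previous state therefore gives `G_{k+1} = G_k ∘ φ` for the generating
functions `G_k s = ∑ j, p k j * s ^ j`, so `G_k s = (φ^[k] s) ^ N` and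
`Pr(Λ̃_k = 0) = G_k 0 = q_k ^ N` with `q_k = φ^[k] 0`. Since `φ` is increasing, the bounds
`exp (-3 / k) ≤ q_k ≤ exp (-1 / k)` propagate by induction from the elementary inequalities
`φ (exp (-1 / x)) ≤ exp (-1 / (x + 1))` and `exp (-3 / (x + 1)) ≤ φ (exp (-3 / x))`.
-/

open Real

theorem hasSum_tsum_swap_of_nonneg {β γ : Type*} {f : β → γ → ℝ} (hf : ∀ b c, 0 ≤ f b c)
    {g : β → ℝ} (hrow : ∀ b, HasSum (f b) (g b)) {a : ℝ} (hg : HasSum g a) :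
    HasSum (fun c => ∑' b, f b c) a := by
  have hsum : Summable (Function.uncurry f) :=
    (summable_prod_of_nonneg fun x => hf x.1 x.2).2
      ⟨fun b => (hrow b).summable, by simpa only [(hrow _).tsum_eq] using hg.summable⟩
  have htot : HasSum (Function.uncurry f) a :=
    (hsum.hasSum.prod_fiberwise hrow).unique hg ▸ hsum.hasSum
  have hswap : HasSum (Function.uncurry f ∘ Prod.swap) a :=
    (Equiv.prodComm γ β).hasSum_iff.2 htot
  exact hswap.prod_fiberwise fun c => (hsum.prod_symm.prod_factor c).hasSum

theorem hasSum_mixture_mul_pow {β : Type*} {w : β → ℝ} {κ : β → ℕ → ℝ} (hw : ∀ b, 0 ≤ w b)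
    (hκ : ∀ b j, 0 ≤ κ b j) {s : ℝ} (hs : 0 ≤ s) {G : β → ℝ}
    (hG : ∀ b, HasSum (fun j => κ b j * s ^ j) (G b)) {A : ℝ}
    (hA : HasSum (fun b => w b * G b) A) :
    HasSum (fun j => (∑' b, w b * κ b j) * s ^ j) A := by
  simp_rw [← tsum_mul_right, mul_assoc]
  exact hasSum_tsum_swap_of_nonneg (fun b j => by have := hw b; have := hκ b j; positivity)
    (fun b => (hG b).mul_left (w b)) hA

theorem hasSum_poisson_mul_pow (r s : ℝ) :
    HasSum (fun j => exp (-r) * r ^ j / j.factorial * s ^ j) (exp (r * (s - 1))) := by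
  have h := (NormedSpace.expSeries_div_hasSum_exp (r * s)).mul_left (exp (-r))
  rw [← exp_eq_exp_ℝ, ← exp_add, show -r + r * s = r * (s - 1) by ring] at h
  have hterm : (fun j : ℕ => exp (-r) * r ^ j / j.factorial * s ^ j) =
      fun j => exp (-r) * ((r * s) ^ j / j.factorial) := by
    funext j; ring
  rw [hterm]
  exact h

noncomputable def poissonPGF (s : ℝ) : ℝ := exp (s - 1)

theorem monotone_poissonPGF : Monotone poissonPGF :=
  fun _ _ h => exp_le_exp.2 (by linarith)

theorem poissonPGF_exp_neg_one_div_le {x : ℝ} (hx : 0 < x) :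
    poissonPGF (exp (-1 / x)) ≤ exp (-1 / (x + 1)) := by
  refine exp_le_exp.2 ?_
  have h : exp (-1 / x) ≤ x / (x + 1) := by
    calc exp (-1 / x) = (exp (1 / x))⁻¹ := by rw [neg_div, exp_neg]
      _ ≤ (1 / x + 1)⁻¹ := inv_anti₀ (by positivity) (add_one_le_exp _)
      _ = x / (x + 1) := by field_simp; ring
  have h' : x / (x + 1) - 1 = -1 / (x + 1) := by field_simp; ring
  linarith

theorem exp_neg_three_div_add_one_le_poissonPGF {x : ℝ} (hx : 1 ≤ x) :
    exp (-3 / (x + 1)) ≤ poissonPGF (exp (-3 / x)) := by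
  refine exp_le_exp.2 ?_
  have hcube : (1 - 1 / x) ^ 3 ≤ exp (-3 / x) := by
    have h := one_sub_div_pow_le_exp_neg (n := 3) (t := 3 / x)
      (by rw [div_le_iff₀ (by linarith)]; push_cast; linarith)
    rw [neg_div]
    convert h using 3
    push_cast; field_simp
  have hpoly : 1 - 3 / (x + 1) ≤ (1 - 1 / x) ^ 3 := by
    rw [← sub_nonneg]
    have heq : (1 - 1 / x) ^ 3 - (1 - 3 / (x + 1)) = (2 * x - 1) / (x ^ 3 * (x + 1)) := by
      field_simp; ring
    rw [heq]
    exact div_nonneg (by linarith) (by positivity)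
  have h' : -3 / (x + 1) = (1 - 3 / (x + 1)) - 1 := by ring
  linarith

theorem iterate_poissonPGF_zero_mem (k : ℕ) :
    exp (-3 / (k + 1)) ≤ poissonPGF^[k + 1] 0 ∧ poissonPGF^[k + 1] 0 ≤ exp (-1 / (k + 1)) := by
  induction k with
  | zero =>
    rw [zero_add, Function.iterate_one, poissonPGF]
    constructor <;> exact exp_le_exp.2 (by norm_num)
  | succ k ih =>
    rw [Function.iterate_succ_apply']
    push_cast
    constructor
    · calc exp (-3 / (k + 1 + 1)) ≤ poissonPGF (exp (-3 / (k + 1))) :=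
            exp_neg_three_div_add_one_le_poissonPGF (by linarith [k.cast_nonneg (α := ℝ)])
        _ ≤ _ := monotone_poissonPGF ih.1
    · calc _ ≤ poissonPGF (exp (-1 / (k + 1))) := monotone_poissonPGF ih.2
        _ ≤ exp (-1 / (k + 1 + 1)) := poissonPGF_exp_neg_one_div_le (by positivity)

theorem poissonChain_nonneg_and_hasSum_mul_pow {N : ℕ} {p : ℕ → ℕ → ℝ}
    (h0 : ∀ j, p 0 j = if j = N then 1 else 0)
    (hstep : ∀ k j, p (k + 1) j =
      ∑' l : ℕ, p k l * (exp (-(l : ℝ)) * (l : ℝ) ^ j / (Nat.factorial j))) (k : ℕ) :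
    (∀ j, 0 ≤ p k j) ∧ ∀ s, 0 ≤ s → HasSum (fun j => p k j * s ^ j) ((poissonPGF^[k] s) ^ N) := by
  induction k with
  | zero =>
    refine ⟨fun j => by rw [h0]; positivity, fun s _ => ?_⟩
    simp only [h0, ite_mul, one_mul, zero_mul, Function.iterate_zero_apply]
    simpa using hasSum_single (f := fun j => if j = N then s ^ j else 0) N fun j hj => if_neg hj
  | succ k ih =>
    obtain ⟨hnonneg, hsum⟩ := ih
    refine ⟨fun j => by rw [hstep]; exact tsum_nonneg fun l => by have := hnonneg l; positivity,
      fun s hs => ?_⟩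
    simp only [hstep, Function.iterate_succ_apply]
    refine hasSum_mixture_mul_pow hnonneg (fun l j => by positivity) hs (fun l => ?_)
      (hsum _ (exp_pos _).le)
    rw [poissonPGF, ← exp_nat_mul]
    exact hasSum_poisson_mul_pow l s

/-- Bounds on the absorption probability of the Poisson recursive training chain:
`p k l` is the probability that the chain is in state `l` at time `k`, started
at the nonnegative integer `N`, with transition kernel `Poisson(l)` from state `l`. -/
theorem poisson_chain_absorption_bounds (N : ℕ) (p : ℕ → ℕ → ℝ)
    (h0 : ∀ j, p 0 j = if j = N then 1 else 0)
    (hstep : ∀ k j, p (k + 1) j =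
      ∑' l : ℕ, p k l * (Real.exp (-(l : ℝ)) * (l : ℝ) ^ j / (Nat.factorial j))) :
    ∀ k : ℕ, 1 ≤ k →
      Real.exp (-3 * (N : ℝ) / k) ≤ p k 0 ∧ p k 0 ≤ Real.exp (-(N : ℝ) / k) := by
  intro k hk
  obtain ⟨k, rfl⟩ : ∃ m, k = m + 1 := ⟨k - 1, by omega⟩
  have hpgf := (poissonChain_nonneg_and_hasSum_mul_pow h0 hstep (k + 1)).2 0 le_rfl
  have hp0 : p (k + 1) 0 = (poissonPGF^[k + 1] 0) ^ N := by
    simpa using (hasSum_single 0 fun j hj => by simp [hj]).unique hpgf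
  obtain ⟨hlower, hupper⟩ := iterate_poissonPGF_zero_mem k
  have hexp (c : ℝ) : exp (c * N / (k + 1 : ℕ)) = exp (c / (k + 1)) ^ N := by
    rw [← exp_nat_mul]; push_cast; ring_nf
  rw [hp0, hexp (-3), show -(N : ℝ) = -1 * N by ring, hexp (-1)]
  exact ⟨pow_le_pow_left₀ (exp_pos _).le hlower N,
    pow_le_pow_left₀ ((exp_pos _).le.trans hlower) hupper N⟩
end

section
/- For the Markov chain (P̃_k) on {0,1,...,n} with P̃_{k+1} | P̃_k = i ~ Binomial(n, i/n), started at P̃_0 = n p_0 (assumed an integer), Pr(P̃_k = 0) ≤ exp(-n p_0 g_k), where g_1 = 1 and g_{j+1} = 1 - exp(-g_j). -/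
/-!
Write `L_k(t) = E[exp(-t P̃_k)]`. Conditionally on `P̃_k = i`, the binomial moment generating
function gives `E[exp(-t P̃_{k+1})] = (1 - (1 - e^{-t}) i/n)^n ≤ exp(-(1 - e^{-t}) i)`, so
`L_{k+1}(t) ≤ L_k(1 - e^{-t})`; likewise `Pr(P̃_{k+1} = 0) = E[(1 - P̃_k/n)^n] ≤ L_k(1)`.
Iterating, `Pr(P̃_k = 0) ≤ L_0(g_k) = exp(-n p₀ g_k)`.
-/

open Finset Real

namespace BinomialChain

def binomialKernel (n : ℕ) (x : ℝ) (j : ℕ) : ℝ :=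
  n.choose j * x ^ j * (1 - x) ^ (n - j)

def IsBinomialChain (n : ℕ) (p : ℕ → ℕ → ℝ) : Prop :=
  ∀ k j, p (k + 1) j = ∑ i ∈ range (n + 1), p k i * binomialKernel n ((i : ℝ) / n) j

noncomputable def laplace (n : ℕ) (q : ℕ → ℝ) (t : ℝ) : ℝ :=
  ∑ j ∈ range (n + 1), q j * exp (-t * j)

variable {n : ℕ}

lemma binomialKernel_nonneg {x : ℝ} (hx0 : 0 ≤ x) (hx1 : x ≤ 1) (j : ℕ) :
    0 ≤ binomialKernel n x j := by
  have : 0 ≤ 1 - x := sub_nonneg.2 hx1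
  unfold binomialKernel
  positivity

lemma binomialKernel_zero_right (x : ℝ) : binomialKernel n x 0 = (1 - x) ^ n := by
  simp [binomialKernel]

lemma sum_binomialKernel_mul_exp (x t : ℝ) :
    ∑ j ∈ range (n + 1), binomialKernel n x j * exp (-t * j) =
      (1 - (1 - exp (-t)) * x) ^ n := by
  rw [show 1 - (1 - exp (-t)) * x = x * exp (-t) + (1 - x) by ring, add_pow]
  refine sum_congr rfl fun j _ => ?_
  rw [binomialKernel, mul_pow, ← exp_nat_mul, mul_neg, mul_comm (j : ℝ) t, neg_mul]
  ring

lemma one_sub_mul_div_pow_le_exp {s : ℝ} (hs : s ≤ 1) {i : ℕ} (hi : i ≤ n) :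
    (1 - s * (i / n)) ^ n ≤ exp (-(s * i)) := by
  rw [← mul_div_assoc]
  refine one_sub_div_pow_le_exp_neg ?_
  calc s * i ≤ i := mul_le_of_le_one_left i.cast_nonneg hs
    _ ≤ n := by exact_mod_cast hi

lemma natCast_div_mem_Icc {i : ℕ} (hi : i ∈ range (n + 1)) : (i : ℝ) / n ∈ Set.Icc 0 1 :=
  ⟨by positivity, div_le_one_of_le₀ (by exact_mod_cast Nat.lt_succ_iff.1 (mem_range.1 hi))
    n.cast_nonneg⟩

namespace IsBinomialChain

variable {p : ℕ → ℕ → ℝ}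

lemma nonneg (hp : IsBinomialChain n p) (h0 : ∀ j, 0 ≤ p 0 j) (k : ℕ) : ∀ j, 0 ≤ p k j := by
  induction k with
  | zero => exact h0
  | succ k ih =>
    intro j
    rw [hp]
    refine sum_nonneg fun i hi => mul_nonneg (ih i) ?_
    obtain ⟨hx0, hx1⟩ := natCast_div_mem_Icc hi
    exact binomialKernel_nonneg hx0 hx1 j

lemma laplace_succ_le (hp : IsBinomialChain n p) (hk : ∀ i, 0 ≤ p k i) (t : ℝ) :
    laplace n (p (k + 1)) t ≤ laplace n (p k) (1 - exp (-t)) := by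
  have hmgf : laplace n (p (k + 1)) t =
      ∑ i ∈ range (n + 1), p k i * (1 - (1 - exp (-t)) * (i / n)) ^ n := by
    simp only [laplace, hp k, sum_mul]
    rw [sum_comm]
    refine sum_congr rfl fun i _ => ?_
    simp only [mul_assoc, ← mul_sum, sum_binomialKernel_mul_exp]
  rw [hmgf, laplace]
  refine sum_le_sum fun i hi => mul_le_mul_of_nonneg_left ?_ (hk i)
  rw [neg_mul]
  exact one_sub_mul_div_pow_le_exp (by linarith [exp_pos (-t)])
    (Nat.lt_succ_iff.1 (mem_range.1 hi))

lemma apply_zero_le_laplace (hp : IsBinomialChain n p) (hk : ∀ i, 0 ≤ p k i) :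
    p (k + 1) 0 ≤ laplace n (p k) 1 := by
  rw [hp, laplace]
  refine sum_le_sum fun i hi => mul_le_mul_of_nonneg_left ?_ (hk i)
  simpa [binomialKernel_zero_right] using
    one_sub_mul_div_pow_le_exp le_rfl (Nat.lt_succ_iff.1 (mem_range.1 hi))

lemma laplace_le_iterate (hp : IsBinomialChain n p) (h0 : ∀ j, 0 ≤ p 0 j) (k : ℕ) (t : ℝ) :
    laplace n (p k) t ≤ laplace n (p 0) ((fun s => 1 - exp (-s))^[k] t) := by
  induction k generalizing t with
  | zero => rfl
  | succ k ih =>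
    calc laplace n (p (k + 1)) t ≤ laplace n (p k) (1 - exp (-t)) :=
          hp.laplace_succ_le (hp.nonneg h0 k) t
      _ ≤ _ := ih _

end IsBinomialChain

lemma laplace_indicator {N : ℕ} (hN : N ≤ n) (t : ℝ) :
    laplace n (fun j => if j = N then 1 else 0) t = exp (-t * N) := by
  simp [laplace, ite_mul, Nat.lt_succ_of_le hN]

lemma eq_iterate_of_rec {g : ℕ → ℝ} (hg1 : g 1 = 1)
    (hgrec : ∀ k ≥ 1, g (k + 1) = 1 - exp (-(g k))) (k : ℕ) :
    g (k + 1) = (fun s => 1 - exp (-s))^[k] 1 := by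
  induction k with
  | zero => exact hg1
  | succ k ih => rw [hgrec _ (Nat.le_add_left 1 k), ih, Function.iterate_succ_apply']

end BinomialChain

open BinomialChain in
theorem binomial_chain_absorption_upper_general (n : ℕ) (p₀ : ℝ)
    (hp₀1 : p₀ ≤ 1) (N : ℕ) (hN : (N : ℝ) = n * p₀)
    (g : ℕ → ℝ) (hg1 : g 1 = 1)
    (hgrec : ∀ k ≥ 1, g (k + 1) = 1 - Real.exp (-(g k)))
    (p : ℕ → ℕ → ℝ)
    (h0 : ∀ j, p 0 j = if j = N then 1 else 0)
    (hstep : ∀ k j, p (k + 1) j =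
      ∑ i ∈ Finset.range (n + 1),
        p k i * ((n.choose j : ℝ) * ((i : ℝ) / n) ^ j * (1 - (i : ℝ) / n) ^ (n - j))) :
    ∀ k : ℕ, 1 ≤ k → p k 0 ≤ Real.exp (-(n : ℝ) * p₀ * g k) := by
  have hp : IsBinomialChain n p := hstep
  have hNn : N ≤ n := by
    have : (N : ℝ) ≤ n := by rw [hN]; exact mul_le_of_le_one_right n.cast_nonneg hp₀1
    exact_mod_cast this
  have hp0 : ∀ j, 0 ≤ p 0 j := fun j => by rw [h0]; positivity
  intro k hk
  obtain ⟨m, rfl⟩ := Nat.exists_eq_add_of_le' hk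
  calc p (m + 1) 0 ≤ laplace n (p m) 1 := hp.apply_zero_le_laplace (hp.nonneg hp0 m)
    _ ≤ laplace n (p 0) ((fun s => 1 - exp (-s))^[m] 1) := hp.laplace_le_iterate hp0 m 1
    _ = exp (-(n : ℝ) * p₀ * g (m + 1)) := by
      rw [funext h0, laplace_indicator hNn, ← eq_iterate_of_rec hg1 hgrec, hN]
      ring_nf

/-- Upper bound on the absorption probability at 0 for the binomial resampling chain:
`p k i` is the probability that the chain is in state `i ∈ {0,…,n}` at time `k`,
started at `N = n p₀` (an integer), with transitions `Binomial(n, i/n)` from state `i`. -/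
theorem binomial_chain_absorption_upper (n : ℕ) (hn : 0 < n) (p₀ : ℝ)
    (hp₀0 : 0 ≤ p₀) (hp₀1 : p₀ ≤ 1) (N : ℕ) (hN : (N : ℝ) = n * p₀)
    (g : ℕ → ℝ) (hg1 : g 1 = 1)
    (hgrec : ∀ k ≥ 1, g (k + 1) = 1 - Real.exp (-(g k)))
    (p : ℕ → ℕ → ℝ)
    (h0 : ∀ j, p 0 j = if j = N then 1 else 0)
    (hstep : ∀ k j, p (k + 1) j =
      ∑ i ∈ Finset.range (n + 1),
        p k i * ((n.choose j : ℝ) * ((i : ℝ) / n) ^ j * (1 - (i : ℝ) / n) ^ (n - j))) :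
    ∀ k : ℕ, 1 ≤ k → p k 0 ≤ Real.exp (-(n : ℝ) * p₀ * g k) :=
  binomial_chain_absorption_upper_general n p₀ hp₀1 N hN g hg1 hgrec p h0 hstep
end

section
/- For the Markov chain (P̃_k) on {0,1,...,n} with P̃_{k+1} | P̃_k = i ~ Binomial(n, i/n), started at P̃_0 = n p_0 (an integer), Pr(P̃_k = 0) ≥ exp(-n p_0 g_k) · (1 - ((n p_0)^2 + n p_0 k)/n · Σ_{m=1}^{k} g_m^2), where g_1 = 1 and g_{j+1} = 1 - exp(-g_j). -/
/-!
Let `G k z = ∑ j, p k j * z ^ j` be the generating function of the chain. Conditionally on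
`X_k = i` the next state is `Binomial(n, i/n)`, so `G (k+1) (1 - s) = E (1 - s X_k / n) ^ n`.
The elementary bound `(1 - x) ^ n ≥ exp (-n x) (1 - n x²)` and Chebyshev's inequality for the
antivarying pair `X²`, `exp (-s X)` turn this into
`G (k+1) (1 - s) ≥ G k (exp (-s)) (1 - s² E X_k² / n)`, and `E X_k² ≤ N² + k N` because the
chain is a martingale whose conditional variance is at most its current value.
Since `exp (-g m) = 1 - g (m+1)`, starting from `p K 0 = G K (1 - g 1)` the steps telescope
down to `G 0 (exp (-g K)) = exp (-N g K)`.
-/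

open Finset Polynomial

theorem Antivary.sum_mul_sum_mul_le_sum_mul_mul_sum {ι α : Type*} [CommRing α] [LinearOrder α]
    [IsStrictOrderedRing α] {f g : ι → α} (hfg : Antivary f g) (s : Finset ι) {w : ι → α}
    (hw : ∀ i ∈ s, 0 ≤ w i) :
    (∑ i ∈ s, w i) * ∑ i ∈ s, w i * (f i * g i) ≤ (∑ i ∈ s, w i * f i) * ∑ i ∈ s, w i * g i := by
  have key : ∑ i ∈ s, ∑ j ∈ s, w i * w j * (f i * g i + f j * g j)
      ≤ ∑ i ∈ s, ∑ j ∈ s, w i * w j * (f i * g j + f j * g i) :=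
    sum_le_sum fun i hi => sum_le_sum fun j hj => mul_le_mul_of_nonneg_left
      (antivary_iff_mul_rearrangement.1 hfg i j) (mul_nonneg (hw i hi) (hw j hj))
  have swap (F : ι → ι → α) : ∑ i ∈ s, ∑ j ∈ s, w i * w j * F i j
      = ∑ i ∈ s, ∑ j ∈ s, w i * w j * F j i := by
    rw [sum_comm]; exact sum_congr rfl fun _ _ => sum_congr rfl fun _ _ => by ring
  simp only [mul_add, sum_add_distrib, swap fun i _ => f i * g i,
    swap fun i j => f j * g i] at key
  rw [sum_mul_sum, sum_mul_sum]
  calc _ = ∑ i ∈ s, ∑ j ∈ s, w i * w j * (f j * g j) :=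
        sum_congr rfl fun _ _ => sum_congr rfl fun _ _ => by ring
    _ ≤ ∑ i ∈ s, ∑ j ∈ s, w i * w j * (f i * g j) := by linarith
    _ = _ := sum_congr rfl fun _ _ => sum_congr rfl fun _ _ => by ring

theorem Real.exp_neg_mul_mul_le_one_sub_pow {x : ℝ} (hx0 : 0 ≤ x) (hx1 : x ≤ 1) (n : ℕ) :
    Real.exp (-(n * x)) * (1 - n * x ^ 2) ≤ (1 - x) ^ n := by
  have bernoulli : 1 - n * x ^ 2 ≤ (1 - x ^ 2) ^ n := by
    simpa [sub_eq_add_neg] using one_add_mul_le_pow (a := -x ^ 2) (by nlinarith) n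
  have single : Real.exp (-x) * (1 - x ^ 2) ≤ 1 - x := by
    rw [show 1 - x ^ 2 = (1 + x) * (1 - x) by ring, ← mul_assoc]
    refine mul_le_of_le_one_left (by linarith) ?_
    rw [Real.exp_neg, inv_mul_le_iff₀ (Real.exp_pos x)]
    linarith [Real.add_one_le_exp x]
  calc Real.exp (-(n * x)) * (1 - n * x ^ 2)
      ≤ Real.exp (-(n * x)) * (1 - x ^ 2) ^ n := by gcongr
    _ = (Real.exp (-x) * (1 - x ^ 2)) ^ n := by rw [mul_pow, ← Real.exp_nat_mul]; ring_nf
    _ ≤ (1 - x) ^ n := by gcongr; exact mul_nonneg (Real.exp_pos _).le (by nlinarith)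

namespace bernsteinPolynomial

section CommRing
variable {R : Type*} [CommRing R]

theorem eval_eq (n ν : ℕ) (x : R) :
    (bernsteinPolynomial R n ν).eval x = n.choose ν * x ^ ν * (1 - x) ^ (n - ν) := by
  simp [bernsteinPolynomial]

theorem sum_eval_mul_pow (n : ℕ) (x z : R) :
    ∑ ν ∈ range (n + 1), (bernsteinPolynomial R n ν).eval x * z ^ ν = (1 - (1 - z) * x) ^ n := by
  rw [show 1 - (1 - z) * x = x * z + (1 - x) by ring, add_pow]
  exact sum_congr rfl fun ν _ => by rw [eval_eq]; ring

theorem sum_eval_mul_cast (n : ℕ) (x : R) :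
    ∑ ν ∈ range (n + 1), (bernsteinPolynomial R n ν).eval x * ν = n * x := by
  simpa [eval_finsetSum, mul_comm] using congrArg (eval x) (sum_smul (R := R) n)

theorem sum_eval_mul_cast_sq (n : ℕ) (x : R) :
    ∑ ν ∈ range (n + 1), (bernsteinPolynomial R n ν).eval x * ν ^ 2
      = (n * x) ^ 2 + n * x * (1 - x) := by
  have hvar := congrArg (eval x) (variance (R := R) n)
  have hsum := congrArg (eval x) (sum (R := R) n)
  simp only [eval_finsetSum, eval_mul, eval_pow, eval_sub, eval_X, eval_natCast, eval_one,
    nsmul_eq_mul] at hvar hsum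
  have expand (ν : ℕ) : (bernsteinPolynomial R n ν).eval x * ν ^ 2
      = (n * x - ν) ^ 2 * (bernsteinPolynomial R n ν).eval x
        + 2 * (n * x) * ((bernsteinPolynomial R n ν).eval x * ν)
        - (n * x) ^ 2 * (bernsteinPolynomial R n ν).eval x := by ring
  simp only [expand, sum_sub_distrib, sum_add_distrib, ← mul_sum, hvar, hsum,
    sum_eval_mul_cast]
  ring

end CommRing

theorem eval_nonneg (n ν : ℕ) {x : ℝ} (hx0 : 0 ≤ x) (hx1 : x ≤ 1) :
    0 ≤ (bernsteinPolynomial ℝ n ν).eval x := by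
  rw [eval_eq]
  have : 0 ≤ 1 - x := sub_nonneg.2 hx1
  positivity

end bernsteinPolynomial

theorem sum_mul_exp_neg_pow_mul_le {n : ℕ} (hn : 0 < n) {w : ℕ → ℝ} (hw : ∀ i, 0 ≤ w i)
    (hw1 : ∑ i ∈ range (n + 1), w i = 1) {s : ℝ} (hs0 : 0 ≤ s) (hs1 : s ≤ 1) :
    (∑ i ∈ range (n + 1), w i * Real.exp (-s) ^ i)
        * (1 - s ^ 2 * (∑ i ∈ range (n + 1), w i * (i : ℝ) ^ 2) / n)
      ≤ ∑ i ∈ range (n + 1), w i * (1 - s * (i / n)) ^ n := by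
  have hn' : (0 : ℝ) < n := by exact_mod_cast hn
  have pointwise : ∀ i ∈ range (n + 1),
      Real.exp (-s) ^ i * (1 - s ^ 2 / n * (i : ℝ) ^ 2) ≤ (1 - s * (i / n)) ^ n := by
    intro i hi
    have hin : (i : ℝ) / n ≤ 1 :=
      div_le_one_of_le₀ (by exact_mod_cast Nat.lt_succ_iff.1 (mem_range.1 hi)) hn'.le
    have := Real.exp_neg_mul_mul_le_one_sub_pow (x := s * (i / n)) (by positivity)
      (mul_le_one₀ hs1 (by positivity) hin) n
    convert this using 2
    · rw [← Real.exp_nat_mul]; field_simp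
    · field_simp
  have antivary : Antivary (fun i : ℕ => (i : ℝ) ^ 2) (fun i => Real.exp (-s) ^ i) :=
    Monotone.antivary (fun a b h => by gcongr)
      (pow_right_anti₀ (Real.exp_pos _).le (Real.exp_le_one_iff.2 (by linarith)))
  have chebyshev := antivary.sum_mul_sum_mul_le_sum_mul_mul_sum (range (n + 1)) fun i _ => hw i
  rw [hw1, one_mul] at chebyshev
  calc _ = ∑ i ∈ range (n + 1), w i * Real.exp (-s) ^ i
        - s ^ 2 / n * ((∑ i ∈ range (n + 1), w i * (i : ℝ) ^ 2)
          * ∑ i ∈ range (n + 1), w i * Real.exp (-s) ^ i) := by ring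
    _ ≤ ∑ i ∈ range (n + 1), w i * Real.exp (-s) ^ i
        - s ^ 2 / n * ∑ i ∈ range (n + 1), w i * ((i : ℝ) ^ 2 * Real.exp (-s) ^ i) := by
      gcongr
    _ = ∑ i ∈ range (n + 1), w i * (Real.exp (-s) ^ i * (1 - s ^ 2 / n * (i : ℝ) ^ 2)) := by
      rw [mul_sum, ← sum_sub_distrib]
      exact sum_congr rfl fun i _ => by ring
    _ ≤ _ := sum_le_sum fun i hi => mul_le_mul_of_nonneg_left (pointwise i hi) (hw i)

def IsWrightFisherChain (n : ℕ) (p : ℕ → ℕ → ℝ) : Prop :=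
  ∀ k j, p (k + 1) j = ∑ i ∈ range (n + 1), p k i * (bernsteinPolynomial ℝ n j).eval ((i : ℝ) / n)

namespace IsWrightFisherChain

variable {n : ℕ} {p : ℕ → ℕ → ℝ}

theorem sum_succ_mul_eq (hstep : IsWrightFisherChain n p) (k : ℕ) (F : ℕ → ℝ) :
    ∑ j ∈ range (n + 1), p (k + 1) j * F j
      = ∑ i ∈ range (n + 1), p k i *
          ∑ j ∈ range (n + 1), (bernsteinPolynomial ℝ n j).eval ((i : ℝ) / n) * F j := by
  simp only [hstep k, sum_mul, mul_sum]
  rw [sum_comm]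
  exact sum_congr rfl fun _ _ => sum_congr rfl fun _ _ => by ring

theorem nonneg_of_nonneg_zero (hstep : IsWrightFisherChain n p) (h0 : ∀ j, 0 ≤ p 0 j) :
    ∀ k j, 0 ≤ p k j := by
  intro k
  induction k with
  | zero => exact h0
  | succ k ih =>
    intro j
    rw [hstep]
    refine sum_nonneg fun i hi => mul_nonneg (ih i) (bernsteinPolynomial.eval_nonneg _ _
      (by positivity) (div_le_one_of_le₀ ?_ (Nat.cast_nonneg n)))
    exact_mod_cast Nat.lt_succ_iff.1 (mem_range.1 hi)

theorem sum_succ_mul_pow (hstep : IsWrightFisherChain n p) (k : ℕ) (z : ℝ) :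
    ∑ j ∈ range (n + 1), p (k + 1) j * z ^ j
      = ∑ i ∈ range (n + 1), p k i * (1 - (1 - z) * (i / n)) ^ n := by
  simp only [hstep.sum_succ_mul_eq, bernsteinPolynomial.sum_eval_mul_pow]

theorem sum_eq_sum_zero (hstep : IsWrightFisherChain n p) (k : ℕ) :
    ∑ j ∈ range (n + 1), p k j = ∑ j ∈ range (n + 1), p 0 j := by
  induction k with
  | zero => rfl
  | succ k ih => simpa [← ih] using hstep.sum_succ_mul_pow k 1

theorem sum_mul_cast_eq_sum_zero (hstep : IsWrightFisherChain n p) (hn : 0 < n) (k : ℕ) :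
    ∑ j ∈ range (n + 1), p k j * j = ∑ j ∈ range (n + 1), p 0 j * j := by
  induction k with
  | zero => rfl
  | succ k ih =>
    rw [hstep.sum_succ_mul_eq, ← ih]
    refine sum_congr rfl fun i _ => ?_
    rw [bernsteinPolynomial.sum_eval_mul_cast]
    field_simp

theorem sum_mul_cast_sq_le (hstep : IsWrightFisherChain n p) (hn : 0 < n) (h0 : ∀ j, 0 ≤ p 0 j)
    (k : ℕ) :
    ∑ j ∈ range (n + 1), p k j * (j : ℝ) ^ 2
      ≤ ∑ j ∈ range (n + 1), p 0 j * (j : ℝ) ^ 2 + k * ∑ j ∈ range (n + 1), p 0 j * j := by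
  induction k with
  | zero => simp
  | succ k ih =>
    have hn' : (0 : ℝ) < n := by exact_mod_cast hn
    have second_moment : ∀ i ∈ range (n + 1),
        ∑ j ∈ range (n + 1), (bernsteinPolynomial ℝ n j).eval ((i : ℝ) / n) * (j : ℝ) ^ 2
          ≤ (i : ℝ) ^ 2 + i := by
      intro i hi
      have hin : (i : ℝ) / n ≤ 1 :=
        div_le_one_of_le₀ (by exact_mod_cast Nat.lt_succ_iff.1 (mem_range.1 hi)) hn'.le
      rw [bernsteinPolynomial.sum_eval_mul_cast_sq, mul_div_cancel₀ _ hn'.ne']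
      nlinarith [show (0 : ℝ) ≤ i / n by positivity, Nat.cast_nonneg (α := ℝ) i]
    calc _ ≤ ∑ i ∈ range (n + 1), p k i * ((i : ℝ) ^ 2 + i) := by
          rw [hstep.sum_succ_mul_eq]
          exact sum_le_sum fun i hi => mul_le_mul_of_nonneg_left (second_moment i hi)
            (hstep.nonneg_of_nonneg_zero h0 k i)
      _ = ∑ i ∈ range (n + 1), p k i * (i : ℝ) ^ 2 + ∑ i ∈ range (n + 1), p 0 i * i := by
          rw [← hstep.sum_mul_cast_eq_sum_zero hn k, ← sum_add_distrib]
          exact sum_congr rfl fun i _ => by ring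
      _ ≤ _ := by push_cast; linarith

theorem sum_mul_exp_neg_pow_mul_le_sum_succ_mul_pow (hstep : IsWrightFisherChain n p)
    (hn : 0 < n) (h0 : ∀ j, 0 ≤ p 0 j) (h1 : ∑ j ∈ range (n + 1), p 0 j = 1) {k K : ℕ}
    (hk : k ≤ K) {s : ℝ} (hs0 : 0 ≤ s) (hs1 : s ≤ 1) :
    (∑ j ∈ range (n + 1), p k j * Real.exp (-s) ^ j)
        * (1 - (∑ j ∈ range (n + 1), p 0 j * (j : ℝ) ^ 2
            + K * ∑ j ∈ range (n + 1), p 0 j * j) / n * s ^ 2)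
      ≤ ∑ j ∈ range (n + 1), p (k + 1) j * (1 - s) ^ j := by
  rw [hstep.sum_succ_mul_pow, sub_sub_cancel]
  refine le_trans ?_ (sum_mul_exp_neg_pow_mul_le hn (hstep.nonneg_of_nonneg_zero h0 k)
    ((hstep.sum_eq_sum_zero k).trans h1) hs0 hs1)
  have hmean : 0 ≤ ∑ j ∈ range (n + 1), p 0 j * j :=
    sum_nonneg fun j _ => mul_nonneg (h0 j) (Nat.cast_nonneg j)
  have hmoment := hstep.sum_mul_cast_sq_le hn h0 k
  refine mul_le_mul_of_nonneg_left ?_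
    (sum_nonneg fun j _ => mul_nonneg (hstep.nonneg_of_nonneg_zero h0 k j) (by positivity))
  rw [sub_le_sub_iff_left, mul_comm _ (s ^ 2), mul_div_assoc]
  gcongr
  nlinarith [show (k : ℝ) ≤ K by exact_mod_cast hk]

end IsWrightFisherChain

theorem mem_Icc_of_one_sub_exp_neg_rec {g : ℕ → ℝ} (hg1 : g 1 = 1)
    (hgrec : ∀ k ≥ 1, g (k + 1) = 1 - Real.exp (-(g k))) : ∀ m ≥ 1, g m ∈ Set.Icc 0 1 := by
  intro m hm
  induction m, hm using Nat.le_induction with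
  | base => simp [hg1]
  | succ m hm ih =>
    rw [hgrec m hm, Set.mem_Icc]
    exact ⟨sub_nonneg.2 (Real.exp_le_one_iff.2 (by linarith [ih.1])),
      by linarith [Real.exp_pos (-g m)]⟩

theorem mul_one_sub_mul_sum_le_of_step {G : ℕ → ℝ → ℝ} {g : ℕ → ℝ} {c : ℝ} (hc : 0 ≤ c)
    (hg : ∀ m ≥ 1, g m ∈ Set.Icc 0 1) (hgrec : ∀ k ≥ 1, g (k + 1) = 1 - Real.exp (-(g k)))
    (hG0 : ∀ m ≥ 1, 0 ≤ G 0 (1 - g m)) (j : ℕ)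
    (hstep : ∀ k < j, ∀ s ∈ Set.Icc (0 : ℝ) 1,
      G k (Real.exp (-s)) * (1 - c * s ^ 2) ≤ G (k + 1) (1 - s))
    (m : ℕ) (hm : 1 ≤ m) (hsmall : ∀ l < j, c * g (m + l) ^ 2 ≤ 1) :
    G 0 (1 - g (m + j)) * (1 - c * ∑ l ∈ range j, g (m + l) ^ 2) ≤ G j (1 - g m) := by
  induction j generalizing m with
  | zero => simp
  | succ j ih =>
    have ih' := ih (fun k hk => hstep k (by omega)) (m + 1) (by omega)
      fun l hl => by rw [add_right_comm, add_assoc]; exact hsmall (l + 1) (by omega)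
    have hrest : 0 ≤ ∑ l ∈ range j, g (m + 1 + l) ^ 2 := sum_nonneg fun _ _ => sq_nonneg _
    have hGm : 0 ≤ G 0 (1 - g (m + 1 + j)) := hG0 _ (by omega)
    have hfirst : 0 ≤ 1 - c * g m ^ 2 := sub_nonneg.2 (by simpa using hsmall 0 (by omega))
    calc G 0 (1 - g (m + (j + 1))) * (1 - c * ∑ l ∈ range (j + 1), g (m + l) ^ 2)
        ≤ G 0 (1 - g (m + 1 + j)) * (1 - c * ∑ l ∈ range j, g (m + 1 + l) ^ 2)
            * (1 - c * g m ^ 2) := by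
          rw [sum_range_succ', show m + 1 + j = m + (j + 1) by omega]
          simp only [add_zero, ← add_assoc, add_right_comm m _ 1]
          nlinarith [mul_nonneg hGm
            (mul_nonneg (mul_nonneg hc hrest) (mul_nonneg hc (sq_nonneg (g m))))]
      _ ≤ G j (1 - g (m + 1)) * (1 - c * g m ^ 2) := mul_le_mul_of_nonneg_right ih' hfirst
      _ ≤ G (j + 1) (1 - g m) := by
          rw [hgrec m hm, sub_sub_cancel]
          exact hstep j (by omega) (g m) (hg m hm)

theorem binomial_chain_absorption_lower_general (n : ℕ) (hn : 0 < n) (p₀ : ℝ)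
    (hp₀1 : p₀ ≤ 1) (N : ℕ) (hN : (N : ℝ) = n * p₀)
    (g : ℕ → ℝ) (hg1 : g 1 = 1)
    (hgrec : ∀ k ≥ 1, g (k + 1) = 1 - Real.exp (-(g k)))
    (p : ℕ → ℕ → ℝ)
    (h0 : ∀ j, p 0 j = if j = N then 1 else 0)
    (hstep : ∀ k j, p (k + 1) j =
      ∑ i ∈ Finset.range (n + 1),
        p k i * ((n.choose j : ℝ) * ((i : ℝ) / n) ^ j * (1 - (i : ℝ) / n) ^ (n - j))) :
    ∀ k : ℕ, 1 ≤ k →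
      p k 0 ≥ Real.exp (-(n : ℝ) * p₀ * g k) *
        (1 - (((n : ℝ) * p₀) ^ 2 + (n : ℝ) * p₀ * k) / n * ∑ m ∈ Finset.Icc 1 k, (g m) ^ 2) := by
  intro K hK
  have hNn : N ≤ n := by
    have : (N : ℝ) ≤ n := hN ▸ mul_le_of_le_one_right (Nat.cast_nonneg n) hp₀1
    exact_mod_cast this
  have hchain : IsWrightFisherChain n p := fun k j => by
    simp only [hstep k j, bernsteinPolynomial.eval_eq]
  have hstart (F : ℕ → ℝ) : ∑ j ∈ range (n + 1), p 0 j * F j = F N := by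
    simp [h0, Nat.lt_succ_iff.2 hNn]
  have hstart_nonneg (j : ℕ) : 0 ≤ p 0 j := by rw [h0]; split_ifs <;> norm_num
  set c := ((N : ℝ) ^ 2 + N * K) / n with hc
  have hstepG : ∀ k < K, ∀ s ∈ Set.Icc (0 : ℝ) 1,
      (∑ j ∈ range (n + 1), p k j * Real.exp (-s) ^ j) * (1 - c * s ^ 2)
        ≤ ∑ j ∈ range (n + 1), p (k + 1) j * (1 - s) ^ j := fun k hk s hs => by
    simpa [hstart, hc, mul_comm (N : ℝ)] using
      hchain.sum_mul_exp_neg_pow_mul_le_sum_succ_mul_pow hn hstart_nonneg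
        (by simpa using hstart 1) hk.le hs.1 hs.2
  have hsum : ∑ l ∈ range K, g (1 + l) ^ 2 = ∑ m ∈ Icc 1 K, g m ^ 2 := by
    rw [← Finset.Ico_add_one_right_eq_Icc, sum_Ico_eq_sum_range, Nat.add_sub_cancel]
  rw [show -(n : ℝ) * p₀ * g K = N * -g K by rw [hN]; ring, Real.exp_nat_mul, ← hN, ← hc,
    ge_iff_le]
  have hc0 : 0 ≤ c := by positivity
  have hg := mem_Icc_of_one_sub_exp_neg_rec hg1 hgrec
  rcases le_or_gt (c * ∑ m ∈ Icc 1 K, g m ^ 2) 1 with hsmall | hlarge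
  · have := mul_one_sub_mul_sum_le_of_step (G := fun k z => ∑ j ∈ range (n + 1), p k j * z ^ j)
      hc0 hg hgrec (fun m hm => by simpa [hstart] using pow_nonneg (sub_nonneg.2 (hg m hm).2) N)
      K hstepG 1 le_rfl fun l hl => le_trans (mul_le_mul_of_nonneg_left
        (single_le_sum (fun m _ => sq_nonneg (g m)) (mem_Icc.2 ⟨by omega, by omega⟩)) hc0) hsmall
    simpa [hsum, hstart, hg1, sum_range_succ', add_comm 1 K, hgrec K hK] using this
  · exact le_trans (mul_nonpos_of_nonneg_of_nonpos (by positivity) (by linarith))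
      (hchain.nonneg_of_nonneg_zero hstart_nonneg K 0)

/-- Lower bound on the absorption probability at 0 for the binomial resampling chain:
`p k i` is the probability that the chain is in state `i ∈ {0,…,n}` at time `k`,
started at `N = n p₀` (an integer), with transitions `Binomial(n, i/n)` from state `i`. -/
theorem binomial_chain_absorption_lower (n : ℕ) (hn : 0 < n) (p₀ : ℝ)
    (hp₀0 : 0 ≤ p₀) (hp₀1 : p₀ ≤ 1) (N : ℕ) (hN : (N : ℝ) = n * p₀)
    (g : ℕ → ℝ) (hg1 : g 1 = 1)
    (hgrec : ∀ k ≥ 1, g (k + 1) = 1 - Real.exp (-(g k)))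
    (p : ℕ → ℕ → ℝ)
    (h0 : ∀ j, p 0 j = if j = N then 1 else 0)
    (hstep : ∀ k j, p (k + 1) j =
      ∑ i ∈ Finset.range (n + 1),
        p k i * ((n.choose j : ℝ) * ((i : ℝ) / n) ^ j * (1 - (i : ℝ) / n) ^ (n - j))) :
    ∀ k : ℕ, 1 ≤ k →
      p k 0 ≥ Real.exp (-(n : ℝ) * p₀ * g k) *
        (1 - (((n : ℝ) * p₀) ^ 2 + (n : ℝ) * p₀ * k) / n * ∑ m ∈ Finset.Icc 1 k, (g m) ^ 2) :=
  binomial_chain_absorption_lower_general n hn p₀ hp₀1 N hN g hg1 hgrec p h0 hstep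
end

section
/- For m ≥ 2 (degrees of freedom), if U ~ χ²_m / m, then E[√U] = Γ((m+1)/2)/((m/2)^{1/2} Γ(m/2)) ≤ exp(-1/(4m+3)). -/
open Real MeasureTheory Set

lemma gammaInt {s : ℝ} (hs : 0 < s) :
    ∫ t in Ioi (0:ℝ), t ^ (s-1) * Real.exp (-t) = Real.Gamma s := by
  rw [Real.Gamma_eq_integral hs]
  exact setIntegral_congr_fun measurableSet_Ioi fun x _ => mul_comm _ _

lemma gammaIntble {s : ℝ} (hs : 0 < s) :
    IntegrableOn (fun t : ℝ => t ^ (s-1) * Real.exp (-t)) (Ioi 0) :=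
  (Real.GammaIntegral_convergent hs).congr_fun (fun x _ => mul_comm _ _) measurableSet_Ioi

lemma gurland {a : ℝ} (ha : 0 < a) :
    Real.Gamma (a + 1/2) ^ 2 * (a + 1/4) ≤ a ^ 2 * Real.Gamma a ^ 2 := by
  have hG : 0 < Real.Gamma a := Real.Gamma_pos_of_pos ha
  have ha2 : 0 < a + 1/2 := by linarith
  have ha1 : 0 < a + 1 := by linarith
  have ha3 : 0 < a + 3/2 := by linarith
  have ha4 : 0 < a + 2 := by linarith
  obtain ⟨G, hGdef⟩ : ∃ G, Real.Gamma a = G := ⟨_, rfl⟩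
  obtain ⟨H, hHdef⟩ : ∃ H, Real.Gamma (a + 1/2) = H := ⟨_, rfl⟩
  rw [hGdef] at hG
  rw [hGdef, hHdef]
  have hpt : ∀ t ∈ Ioi (0:ℝ),
      (2*a*G*Real.sqrt t - a*H - H*t)^2 * (t^(a-1)*Real.exp (-t))
      = (4*a^2*G^2 + 2*a*H^2) * (t^((a+1)-1)*Real.exp (-t))
        + (a^2*H^2) * (t^(a-1)*Real.exp (-t))
        + (H^2) * (t^((a+2)-1)*Real.exp (-t))
        + (-(4*a^2*G*H)) * (t^((a+1/2)-1)*Real.exp (-t))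
        + (-(4*a*G*H)) * (t^((a+3/2)-1)*Real.exp (-t)) := by
    intro t ht
    have ht' : (0:ℝ) < t := ht
    have e1 : t^(a+1-1) = t * t^(a-1) := by
      rw [show a+1-1 = 1+(a-1) by ring, Real.rpow_add ht', Real.rpow_one]
    have e2 : t^(a+2-1) = t * (t * t^(a-1)) := by
      rw [show a+2-1 = 1+(1+(a-1)) by ring, Real.rpow_add ht', Real.rpow_one,
        Real.rpow_add ht', Real.rpow_one]
    have e3 : t^(a+1/2-1) = Real.sqrt t * t^(a-1) := by
      rw [show a+1/2-1 = 1/2+(a-1) by ring, Real.rpow_add ht', Real.sqrt_eq_rpow]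
    have e4 : t^(a+3/2-1) = Real.sqrt t * (t * t^(a-1)) := by
      rw [show a+3/2-1 = 1/2+(1+(a-1)) by ring, Real.rpow_add ht', Real.rpow_add ht',
        Real.rpow_one, Real.sqrt_eq_rpow]
    rw [e1, e2, e3, e4]
    have hst : Real.sqrt t * Real.sqrt t = t := Real.mul_self_sqrt ht'.le
    linear_combination (4*a^2*G^2*(t^(a-1)*Real.exp (-t))) * hst
  have hnn : (0:ℝ) ≤ ∫ t in Ioi (0:ℝ),
      (2*a*G*Real.sqrt t - a*H - H*t)^2 * (t^(a-1)*Real.exp (-t)) :=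
    setIntegral_nonneg measurableSet_Ioi fun t ht => by
      have ht' : (0:ℝ) < t := ht; positivity
  have hI : ∫ t in Ioi (0:ℝ),
      (2*a*G*Real.sqrt t - a*H - H*t)^2 * (t^(a-1)*Real.exp (-t))
      = (4*a^2*G^2 + 2*a*H^2) * Real.Gamma (a+1) + (a^2*H^2) * Real.Gamma a
        + (H^2) * Real.Gamma (a+2) + (-(4*a^2*G*H)) * Real.Gamma (a+1/2)
        + (-(4*a*G*H)) * Real.Gamma (a+3/2) := by
    rw [setIntegral_congr_fun measurableSet_Ioi hpt]
    have i1 : Integrable (fun t:ℝ => (4*a^2*G^2 + 2*a*H^2) * (t^((a+1)-1)*Real.exp (-t)))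
        (volume.restrict (Ioi 0)) := (gammaIntble ha1).const_mul _
    have i2 : Integrable (fun t:ℝ => (a^2*H^2) * (t^(a-1)*Real.exp (-t)))
        (volume.restrict (Ioi 0)) := (gammaIntble ha).const_mul _
    have i3 : Integrable (fun t:ℝ => (H^2) * (t^((a+2)-1)*Real.exp (-t)))
        (volume.restrict (Ioi 0)) := (gammaIntble ha4).const_mul _
    have i4 : Integrable (fun t:ℝ => (-(4*a^2*G*H)) * (t^((a+1/2)-1)*Real.exp (-t)))
        (volume.restrict (Ioi 0)) := (gammaIntble ha2).const_mul _
    have i5 : Integrable (fun t:ℝ => (-(4*a*G*H)) * (t^((a+3/2)-1)*Real.exp (-t)))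
        (volume.restrict (Ioi 0)) := (gammaIntble ha3).const_mul _
    have i12 : Integrable (fun t:ℝ => (4*a^2*G^2 + 2*a*H^2) * (t^((a+1)-1)*Real.exp (-t))
        + (a^2*H^2) * (t^(a-1)*Real.exp (-t))) (volume.restrict (Ioi 0)) := i1.add i2
    have i123 : Integrable (fun t:ℝ => (4*a^2*G^2 + 2*a*H^2) * (t^((a+1)-1)*Real.exp (-t))
        + (a^2*H^2) * (t^(a-1)*Real.exp (-t))
        + (H^2) * (t^((a+2)-1)*Real.exp (-t))) (volume.restrict (Ioi 0)) := i12.add i3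
    have i1234 : Integrable (fun t:ℝ => (4*a^2*G^2 + 2*a*H^2) * (t^((a+1)-1)*Real.exp (-t))
        + (a^2*H^2) * (t^(a-1)*Real.exp (-t))
        + (H^2) * (t^((a+2)-1)*Real.exp (-t))
        + (-(4*a^2*G*H)) * (t^((a+1/2)-1)*Real.exp (-t))) (volume.restrict (Ioi 0)) := i123.add i4
    rw [integral_add i1234 i5, integral_add i123 i4, integral_add i12 i3, integral_add i1 i2]
    simp only [MeasureTheory.integral_const_mul]
    rw [gammaInt ha1, gammaInt ha, gammaInt ha4, gammaInt ha2, gammaInt ha3]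
  rw [hI] at hnn
  have g1 : Real.Gamma (a+1) = a * G := by rw [Real.Gamma_add_one ha.ne', hGdef]
  have g2 : Real.Gamma (a+2) = (a+1) * (a * G) := by
    rw [show a+2 = (a+1)+1 by ring, Real.Gamma_add_one ha1.ne', g1]
  have g3 : Real.Gamma (a+3/2) = (a+1/2) * H := by
    rw [show a+3/2 = (a+1/2)+1 by ring, Real.Gamma_add_one ha2.ne', hHdef]
  rw [g1, g2, g3, hGdef, hHdef] at hnn
  nlinarith [mul_pos ha hG, hnn]

/-- For `U ~ χ²_m / m` with `m ≥ 2`,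
`E[√U] = Γ((m+1)/2)/((m/2)^(1/2) Γ(m/2)) ≤ exp(-1/(4m+3))`. -/
theorem scaled_chiSq_sqrt_moment (m : ℕ) (hm : 2 ≤ m) :
    (∫ u in Set.Ioi (0 : ℝ),
      Real.sqrt u * (((m : ℝ) / 2) ^ ((m : ℝ) / 2) / Real.Gamma ((m : ℝ) / 2) *
        u ^ ((m : ℝ) / 2 - 1) * Real.exp (-(m : ℝ) * u / 2))
      = Real.Gamma (((m : ℝ) + 1) / 2) / (((m : ℝ) / 2) ^ ((1 : ℝ) / 2) * Real.Gamma ((m : ℝ) / 2)))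
    ∧ Real.Gamma (((m : ℝ) + 1) / 2) / (((m : ℝ) / 2) ^ ((1 : ℝ) / 2) * Real.Gamma ((m : ℝ) / 2))
      ≤ Real.exp (-1 / (4 * (m : ℝ) + 3)) := by
  have hm' : (2:ℝ) ≤ (m:ℝ) := by exact_mod_cast hm
  set a : ℝ := (m:ℝ)/2 with hA
  have ha : 0 < a := by simp only [hA]; linarith
  have ha2 : 0 < a + 1/2 := by linarith
  have hG : 0 < Real.Gamma a := Real.Gamma_pos_of_pos ha
  have hH : 0 < Real.Gamma (a + 1/2) := Real.Gamma_pos_of_pos ha2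
  have hm1 : ((m:ℝ) + 1)/2 = a + 1/2 := by rw [hA]; ring
  rw [hm1]
  have has : 0 < a ^ ((1:ℝ)/2) := Real.rpow_pos_of_pos ha _
  constructor
  · -- the integral computation
    have hcong : ∀ u ∈ Ioi (0:ℝ),
        Real.sqrt u * (a ^ a / Real.Gamma a * u ^ (a - 1) * Real.exp (-(m:ℝ) * u / 2))
        = (a ^ a / Real.Gamma a) * (u ^ ((a + 1/2) - 1) * Real.exp (-(a * u))) := by
      intro u hu
      have hu' : (0:ℝ) < u := hu
      have e1 : u ^ (a + 1/2 - 1) = Real.sqrt u * u ^ (a - 1) := by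
        rw [show a + 1/2 - 1 = 1/2 + (a-1) by ring, Real.rpow_add hu', Real.sqrt_eq_rpow]
      have e2 : -(m:ℝ) * u / 2 = -(a * u) := by rw [hA]; ring
      rw [e1, e2]; ring
    rw [setIntegral_congr_fun measurableSet_Ioi hcong, MeasureTheory.integral_const_mul,
      Real.integral_rpow_mul_exp_neg_mul_Ioi ha2 ha]
    have hpow : a ^ a * (1/a) ^ (a + 1/2) * a ^ ((1:ℝ)/2) = 1 := by
      rw [one_div, ← Real.rpow_neg_one a, ← Real.rpow_mul ha.le,
        ← Real.rpow_add ha, ← Real.rpow_add ha,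
        show a + -1 * (a + 1/2) + 1/2 = 0 by ring, Real.rpow_zero]
    rw [div_mul_eq_mul_div, div_eq_div_iff hG.ne' (by positivity)]
    linear_combination (Real.Gamma (a+1/2) * Real.Gamma a) * hpow
  · -- the inequality, via Gurland
    have key := gurland ha
    have h83 : (0:ℝ) < 8*a + 3 := by linarith
    have hsq : (a ^ ((1:ℝ)/2))^2 = a := by
      rw [← Real.rpow_natCast (a ^ ((1:ℝ)/2)) 2, ← Real.rpow_mul ha.le]
      norm_num
    have hEexp : 4 * (m:ℝ) + 3 = 8*a + 3 := by rw [hA]; ring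
    rw [hEexp]
    set E := Real.exp (-1 / (8*a + 3)) with hEdef
    have hE : 0 < E := Real.exp_pos _
    have hE2 : E^2 = Real.exp (-2 / (8*a+3)) := by
      rw [hEdef, sq, ← Real.exp_add, show -1/(8*a+3) + -1/(8*a+3) = -2/(8*a+3) by ring]
    have hlow : (8*a+1)/(8*a+3) ≤ E^2 := by
      rw [hE2]
      have h := Real.add_one_le_exp (-2/(8*a+3))
      have heq : (8*a+1)/(8*a+3) = -2/(8*a+3) + 1 := by field_simp; ring
      linarith
    have hL2 : (Real.Gamma (a+1/2) / (a ^ ((1:ℝ)/2) * Real.Gamma a))^2 ≤ (8*a+1)/(8*a+3) := by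
      rw [div_pow, mul_pow, hsq, div_le_div_iff₀ (by positivity) h83]
      nlinarith [key, sq_nonneg (Real.Gamma (a+1/2)), sq_nonneg (Real.Gamma a), ha]
    have : (Real.Gamma (a+1/2) / (a ^ ((1:ℝ)/2) * Real.Gamma a))^2 ≤ E^2 := le_trans hL2 hlow
    exact (pow_le_pow_iff_left₀ (by positivity) hE.le two_ne_zero).mp this
end

section
/- Gurland's inequality: for every integer m ≥ 1, Γ((m+1)/2)/Γ(m/2) < m/√(2m+1). -/
/-!
With `x = m / 2` the inequality becomes Watson's bound `√(x + 1/4) Γ(x + 1/2) < Γ(x + 1)`, which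
we prove for every real `x > 0`. Write `q x = (x + 1/4) (Γ(x + 1/2) / Γ(x + 1))²` (this is
`watsonQuotient`). The functional equation gives
`q (x + 1) / q x = (x + 5/4)(x + 1/2)² / ((x + 1/4)(x + 1)²) > 1`, and log-convexity of `Γ` gives
`Γ(x + 1/2)² ≤ Γ(x) Γ(x + 1)`, i.e. `q x ≤ 1 + 1/(4x)`. Hence
`q x < q (x + 1) ≤ q (x + 1 + n) ≤ 1 + 1/(4(x + 1 + n)) → 1`.
-/

open Filter Real Topology

namespace Real

theorem Gamma_midpoint_sq_le_mul {s t : ℝ} (hs : 0 < s) (ht : 0 < t) :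
    Gamma ((s + t) / 2) ^ 2 ≤ Gamma s * Gamma t := by
  have h := Gamma_mul_add_mul_le_rpow_Gamma_mul_rpow_Gamma hs ht one_half_pos one_half_pos
    (add_halves 1)
  rw [← sqrt_eq_rpow, ← sqrt_eq_rpow, ← sqrt_mul (Gamma_pos_of_pos hs).le,
    show 1 / 2 * s + 1 / 2 * t = (s + t) / 2 by ring] at h
  calc Gamma ((s + t) / 2) ^ 2 ≤ √(Gamma s * Gamma t) ^ 2 :=
        pow_le_pow_left₀ (Gamma_pos_of_pos (by positivity)).le h 2
    _ = Gamma s * Gamma t := sq_sqrt (mul_pos (Gamma_pos_of_pos hs) (Gamma_pos_of_pos ht)).le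

theorem mul_Gamma_add_half_sq_le_Gamma_add_one_sq {x : ℝ} (hx : 0 < x) :
    x * Gamma (x + 1 / 2) ^ 2 ≤ Gamma (x + 1) ^ 2 := by
  have h := Gamma_midpoint_sq_le_mul (t := x + 1) hx (by positivity)
  rw [show (x + (x + 1)) / 2 = x + 1 / 2 by ring] at h
  rw [Gamma_add_one hx.ne'] at h ⊢
  calc x * Gamma (x + 1 / 2) ^ 2 ≤ x * (Gamma x * (x * Gamma x)) := by gcongr
    _ = (x * Gamma x) ^ 2 := by ring

noncomputable def watsonQuotient (x : ℝ) : ℝ :=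
  (x + 1 / 4) * (Gamma (x + 1 / 2) / Gamma (x + 1)) ^ 2

theorem watsonQuotient_lt_watsonQuotient_add_one {x : ℝ} (hx : 0 < x) :
    watsonQuotient x < watsonQuotient (x + 1) := by
  have hΓ_half : Gamma (x + 1 + 1 / 2) = (x + 1 / 2) * Gamma (x + 1 / 2) := by
    rw [show x + 1 + 1 / 2 = x + 1 / 2 + 1 by ring, Gamma_add_one (by positivity)]
  have hΓ_one : Gamma (x + 1 + 1) = (x + 1) * Gamma (x + 1) := Gamma_add_one (by positivity)
  have hratio : 0 < (Gamma (x + 1 / 2) / Gamma (x + 1)) ^ 2 := by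
    have := Gamma_pos_of_pos (show 0 < x + 1 / 2 by positivity)
    have := Gamma_pos_of_pos (show 0 < x + 1 by positivity)
    positivity
  have hfactor : x + 1 / 4 < (x + 1 + 1 / 4) * ((x + 1 / 2) / (x + 1)) ^ 2 := by
    rw [div_pow, mul_div_assoc', lt_div_iff₀ (by positivity)]
    nlinarith
  unfold watsonQuotient
  rw [hΓ_half, hΓ_one, mul_div_mul_comm, mul_pow, ← mul_assoc]
  exact mul_lt_mul_of_pos_right hfactor hratio

theorem watsonQuotient_le_one_add_one_div {x : ℝ} (hx : 0 < x) :
    watsonQuotient x ≤ 1 + 1 / (4 * x) := by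
  have hΓ := Gamma_pos_of_pos (show 0 < x + 1 by positivity)
  have hsq : Gamma (x + 1 / 2) ^ 2 ≤ Gamma (x + 1) ^ 2 / x := by
    rw [le_div_iff₀ hx, mul_comm]
    exact mul_Gamma_add_half_sq_le_Gamma_add_one_sq hx
  unfold watsonQuotient
  rw [div_pow, mul_div_assoc', div_le_iff₀ (by positivity),
    show (1 + 1 / (4 * x)) * Gamma (x + 1) ^ 2 = (x + 1 / 4) * (Gamma (x + 1) ^ 2 / x) by
      field_simp]
  gcongr

theorem watsonQuotient_lt_one {x : ℝ} (hx : 0 < x) : watsonQuotient x < 1 := by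
  have hmono : Monotone fun n : ℕ => watsonQuotient (x + 1 + n) := by
    refine monotone_nat_of_le_succ fun n => ?_
    simpa only [Nat.cast_succ, add_assoc] using
      (watsonQuotient_lt_watsonQuotient_add_one (x := x + 1 + n) (by positivity)).le
  have hlim : Tendsto (fun n : ℕ => 1 + 1 / (4 * (x + 1 + n))) atTop (𝓝 1) := by
    have h := tendsto_atTop_add_const_left _ (x + 1) (tendsto_natCast_atTop_atTop (R := ℝ))
    simpa using ((h.const_mul_atTop four_pos).inv_tendsto_atTop).const_add 1
  calc watsonQuotient x < watsonQuotient (x + 1) := watsonQuotient_lt_watsonQuotient_add_one hx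
    _ ≤ 1 := ge_of_tendsto' hlim fun n => by
        simpa only [Nat.cast_zero, add_zero] using
          (hmono (Nat.zero_le n)).trans (watsonQuotient_le_one_add_one_div (by positivity))

theorem sqrt_add_quarter_mul_Gamma_add_half_lt_Gamma_add_one {x : ℝ} (hx : 0 < x) :
    √(x + 1 / 4) * Gamma (x + 1 / 2) < Gamma (x + 1) := by
  have hΓ := Gamma_pos_of_pos (show 0 < x + 1 by positivity)
  have h := watsonQuotient_lt_one hx
  rw [watsonQuotient, div_pow, mul_div_assoc', div_lt_one (by positivity)] at h
  apply lt_of_pow_lt_pow_left₀ 2 hΓ.le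
  rwa [mul_pow, sq_sqrt (by positivity)]

end Real

/-- Gurland's inequality. -/
theorem gurland_gamma_ratio (m : ℕ) (hm : 1 ≤ m) :
    Real.Gamma (((m : ℝ) + 1) / 2) / Real.Gamma ((m : ℝ) / 2)
      < (m : ℝ) / Real.sqrt (2 * (m : ℝ) + 1) := by
  set x : ℝ := m / 2 with hx_def
  have hx : 0 < x := by positivity
  have hm_eq : (m : ℝ) = 2 * x := by rw [hx_def]; ring
  have h := sqrt_add_quarter_mul_Gamma_add_half_lt_Gamma_add_one hx
  rw [Gamma_add_one hx.ne'] at h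
  have hsqrt : √(2 * (m : ℝ) + 1) = 2 * √(x + 1 / 4) := by
    rw [hm_eq, show 2 * (2 * x) + 1 = 2 ^ 2 * (x + 1 / 4) by ring, sqrt_mul (by positivity),
      sqrt_sq zero_le_two]
  rw [show ((m : ℝ) + 1) / 2 = x + 1 / 2 by rw [hm_eq]; ring, hsqrt, hm_eq,
    div_lt_div_iff₀ (Gamma_pos_of_pos hx) (by positivity)]
  linarith
end

section
/- Let σ_0 > 0, n ≥ 3, and let (Σ_k²)_{k≥0} be defined by Σ_0² = σ_0² and Σ_k² = σ_0² U_1 U_2 ⋯ U_k where U_1, …, U_k are i.i.d. χ²_{n-1}/(n-1) random variables. Then for every ε > 0 and k ≥ 1, Pr(Σ_k ≥ ε) ≤ (σ_0/ε) · exp(-k/(4n-1)). -/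
/-!
By Markov's inequality `P(Σ_k ≥ ε) ≤ E[Σ_k] / ε`, and by independence
`E[Σ_k] ≤ σ₀ ∏ E[√U_i]`. Each `U_i` is Gamma-distributed with shape and rate `m = (n-1)/2`,
so `E[√U_i] = Γ(m + 1/2) / (Γ(m) √m)`, and it remains to show the sharpened Gautschi
inequality `Γ(m + 1/2) ≤ √m e^{-1/(8m+3)} Γ(m)`; note `8m + 3 = 4n - 1`.
For this, `D(m) = Γ(m + 1/2)² e^{2/(8m+3)} / (m Γ(m)²)` satisfies `D(m) ≤ D(m + 1)`, by
`Γ(x + 1) = x Γ(x)` and the elementary `m (m + 1) e^{16/((8m+3)(8m+11))} ≤ (m + 1/2)²`,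
while log-convexity of `Γ` gives `D(m) ≤ e^{2/(8m+3)}`, which tends to `1` along `m + ℕ`.
-/

open MeasureTheory ProbabilityTheory Real Set Filter Topology

theorem Gamma_add_half_le_sqrt_mul_Gamma {m : ℝ} (hm : 0 < m) :
    Gamma (m + 1 / 2) ≤ √m * Gamma m := by
  have h := Gamma_mul_add_mul_le_rpow_Gamma_mul_rpow_Gamma hm (by linarith : 0 < m + 1)
    one_half_pos one_half_pos (by norm_num)
  rw [Gamma_add_one hm.ne', ← sqrt_eq_rpow, ← sqrt_eq_rpow, sqrt_mul hm.le, mul_left_comm,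
    mul_self_sqrt (Gamma_pos_of_pos hm).le] at h
  convert h using 2
  ring

theorem mul_add_one_mul_exp_le_add_half_sq {m : ℝ} (hm : 0 ≤ m) :
    m * (m + 1) * exp (16 / ((8 * m + 3) * (8 * m + 11))) ≤ (m + 1 / 2) ^ 2 := by
  set δ := 16 / ((8 * m + 3) * (8 * m + 11))
  have hδ : (m + 1 / 2) ^ 2 * δ ≤ 1 / 4 := by
    rw [mul_div_assoc', div_le_iff₀ (by positivity)]
    nlinarith
  have hexp : (1 - δ) * exp δ ≤ 1 :=
    calc (1 - δ) * exp δ ≤ exp (-δ) * exp δ := by gcongr; linarith [add_one_le_exp (-δ)]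
      _ = 1 := by rw [← exp_add, neg_add_cancel, exp_zero]
  calc m * (m + 1) * exp δ ≤ (m + 1 / 2) ^ 2 * (1 - δ) * exp δ :=
        mul_le_mul_of_nonneg_right (by nlinarith) (exp_pos δ).le
    _ ≤ (m + 1 / 2) ^ 2 := by
        rw [mul_assoc]; exact mul_le_of_le_one_right (by positivity) hexp

noncomputable def gammaHalfDefect (m : ℝ) : ℝ :=
  Gamma (m + 1 / 2) ^ 2 / (m * Gamma m ^ 2) * exp (2 / (8 * m + 3))

theorem gammaHalfDefect_le_exp {m : ℝ} (hm : 0 < m) :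
    gammaHalfDefect m ≤ exp (2 / (8 * m + 3)) := by
  have hΓ : Gamma (m + 1 / 2) ^ 2 ≤ m * Gamma m ^ 2 := by
    calc _ ≤ (√m * Gamma m) ^ 2 :=
          pow_le_pow_left₀ (Gamma_pos_of_pos (by linarith)).le
            (Gamma_add_half_le_sqrt_mul_Gamma hm) 2
      _ = _ := by rw [mul_pow, sq_sqrt hm.le]
  unfold gammaHalfDefect
  refine mul_le_of_le_one_left (exp_pos _).le (div_le_one_of_le₀ hΓ ?_)
  positivity

theorem gammaHalfDefect_add_one {m : ℝ} (hm : 0 < m) :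
    gammaHalfDefect (m + 1) = gammaHalfDefect m *
      ((m + 1 / 2) ^ 2 / (m * (m + 1) * exp (16 / ((8 * m + 3) * (8 * m + 11))))) := by
  have hexp : exp (2 / (8 * m + 3)) =
      exp (2 / (8 * m + 11)) * exp (16 / ((8 * m + 3) * (8 * m + 11))) := by
    rw [← exp_add]; congr 1
    field_simp
    ring
  have hΓ := Gamma_pos_of_pos hm
  rw [gammaHalfDefect, gammaHalfDefect, hexp, show m + 1 + 1 / 2 = m + 1 / 2 + 1 by ring,
    show 8 * (m + 1) + 3 = 8 * m + 11 by ring, Gamma_add_one (by positivity),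
    Gamma_add_one hm.ne']
  field_simp

theorem gammaHalfDefect_le_add_one {m : ℝ} (hm : 0 < m) :
    gammaHalfDefect m ≤ gammaHalfDefect (m + 1) := by
  rw [gammaHalfDefect_add_one hm]
  refine le_mul_of_one_le_right (by rw [gammaHalfDefect]; positivity) ?_
  exact (one_le_div (by positivity)).2 (mul_add_one_mul_exp_le_add_half_sq hm.le)

theorem gammaHalfDefect_le_one {m : ℝ} (hm : 0 < m) : gammaHalfDefect m ≤ 1 := by
  have hmono : Monotone fun K : ℕ ↦ gammaHalfDefect (m + K) :=
    monotone_nat_of_le_succ fun K ↦ by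
      push_cast; rw [← add_assoc]; exact gammaHalfDefect_le_add_one (by positivity)
  have hlim : Tendsto (fun K : ℕ ↦ exp (2 / (8 * (m + K) + 3))) atTop (𝓝 1) := by
    rw [← exp_zero]
    refine (continuous_exp.tendsto 0).comp (Tendsto.div_atTop tendsto_const_nhds ?_)
    refine tendsto_atTop_add_const_right _ _ (Tendsto.const_mul_atTop (by norm_num) ?_)
    exact tendsto_atTop_add_const_left _ _ tendsto_natCast_atTop_atTop
  refine ge_of_tendsto' hlim fun K ↦ ?_
  calc gammaHalfDefect m = gammaHalfDefect (m + (0 : ℕ)) := by simp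
    _ ≤ gammaHalfDefect (m + K) := hmono K.zero_le
    _ ≤ _ := gammaHalfDefect_le_exp (by positivity)

theorem Gamma_add_half_le {m : ℝ} (hm : 0 < m) :
    Gamma (m + 1 / 2) ≤ √m * exp (-1 / (8 * m + 3)) * Gamma m := by
  have h := gammaHalfDefect_le_one hm
  rw [gammaHalfDefect, mul_comm, ← le_div_iff₀' (exp_pos _), div_le_iff₀ (by positivity)] at h
  rw [← pow_le_pow_iff_left₀ (Gamma_pos_of_pos (by linarith)).le (by positivity) two_ne_zero]
  convert h using 1
  rw [mul_pow, mul_pow, sq_sqrt hm.le, ← exp_nat_mul, mul_right_comm, div_eq_mul_inv _ (exp _),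
    ← exp_neg]
  ring_nf

theorem withDensity_chiSq_div_eq_gammaMeasure (c : ℝ) :
    volume.withDensity (fun u ↦ ENNReal.ofReal
      (if 0 < u then (c / 2) ^ (c / 2) / Gamma (c / 2) * u ^ (c / 2 - 1) * exp (-c * u / 2)
       else 0)) = gammaMeasure (c / 2) (c / 2) := by
  refine withDensity_congr_ae ?_
  filter_upwards [Measure.ae_ne volume 0] with u hu
  rw [gammaPDF_eq]
  rcases hu.lt_or_gt with hneg | hpos
  · simp [hneg.not_gt, hneg.not_ge]
  · simp only [if_pos hpos, if_pos hpos.le]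
    ring_nf

theorem lintegral_sqrt_abs_gammaMeasure {a r : ℝ} (ha : 0 < a) (hr : 0 < r) :
    ∫⁻ x, ENNReal.ofReal √|x| ∂gammaMeasure a r =
      ENNReal.ofReal (Gamma (a + 1 / 2) / (Gamma a * √r)) := by
  have hmeas : Measurable fun x : ℝ ↦ ENNReal.ofReal √|x| :=
    measurable_id.abs.sqrt.ennreal_ofReal
  rw [gammaMeasure, lintegral_withDensity_eq_lintegral_mul _ (by unfold gammaPDF; fun_prop) hmeas,
    ← lintegral_add_compl _ (measurableSet_Ioi (a := 0)), compl_Ioi]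
  have hIic : ∫⁻ x in Iic 0, (gammaPDF a r * fun x ↦ ENNReal.ofReal √|x|) x = 0 := by
    refine setLIntegral_eq_zero measurableSet_Iic fun x (hx : x ≤ 0) ↦ ?_
    rcases hx.lt_or_eq with hneg | rfl
    · simp [gammaPDF_of_neg hneg]
    · simp
  set F : ℝ → ℝ := fun x ↦ r ^ a / Gamma a * (x ^ (a + 1 / 2 - 1) * exp (-(r * x)))
  have hIoi : ∫⁻ x in Ioi 0, (gammaPDF a r * fun x ↦ ENNReal.ofReal √|x|) x =
      ∫⁻ x in Ioi 0, ENNReal.ofReal (F x) := by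
    refine setLIntegral_congr_fun measurableSet_Ioi fun x (hx : 0 < x) ↦ ?_
    rw [Pi.mul_apply, gammaPDF_of_nonneg hx.le, ← ENNReal.ofReal_mul (by positivity),
      abs_of_pos hx, sqrt_eq_rpow]
    simp only [F]
    rw [show a + 1 / 2 - 1 = (a - 1) + 1 / 2 by ring, rpow_add hx]
    ring_nf
  have hF : IntegrableOn F (Ioi 0) := by
    refine Integrable.const_mul ?_ _
    have h := integrableOn_rpow_mul_exp_neg_mul_rpow (by linarith : -1 < a + 1 / 2 - 1)
      zero_lt_one hr
    simp only [rpow_one, neg_mul] at h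
    exact h
  rw [hIic, add_zero, hIoi, ← ofReal_integral_eq_lintegral_ofReal hF
    ((ae_restrict_iff' measurableSet_Ioi).2 (ae_of_all _ fun x (hx : 0 < x) ↦ by positivity)),
    integral_const_mul, integral_rpow_mul_exp_neg_mul_Ioi (by linarith) hr, one_div,
    inv_rpow hr.le, rpow_add hr, ← sqrt_eq_rpow]
  field_simp

theorem sqrt_sq_mul_prod_le_abs_mul_prod_sqrt {ι : Type*} (σ : ℝ) (s : Finset ι) (x : ι → ℝ) :
    √(σ ^ 2 * ∏ i ∈ s, x i) ≤ |σ| * ∏ i ∈ s, √|x i| := by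
  calc √(σ ^ 2 * ∏ i ∈ s, x i) ≤ √(σ ^ 2 * ∏ i ∈ s, |x i|) := by
        refine sqrt_le_sqrt (mul_le_mul_of_nonneg_left ?_ (sq_nonneg σ))
        exact (le_abs_self _).trans (Finset.abs_prod s x).le
    _ = |σ| * ∏ i ∈ s, √|x i| := by
        rw [sqrt_mul (sq_nonneg σ), sqrt_sq_eq_abs, sqrt_prod _ fun i _ ↦ abs_nonneg _]

section

variable {Ω ι : Type*} [MeasurableSpace Ω] {P : Measure Ω} {U : ι → Ω → ℝ}

theorem lintegral_sqrt_sq_mul_prod_le (hUmeas : ∀ i, Measurable (U i)) (hUindep : iIndepFun U P)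
    (σ : ℝ) (s : Finset ι) :
    ∫⁻ ω, ENNReal.ofReal √(σ ^ 2 * ∏ i ∈ s, U i ω) ∂P ≤
      ENNReal.ofReal |σ| * ∏ i ∈ s, ∫⁻ ω, ENNReal.ofReal √|U i ω| ∂P := by
  have hV : ∀ i, Measurable fun ω ↦ ENNReal.ofReal √|U i ω| :=
    fun i ↦ (hUmeas i).abs.sqrt.ennreal_ofReal
  have hVindep : iIndepFun (fun i ω ↦ ENNReal.ofReal √|U i ω|) P :=
    hUindep.comp (fun _ x ↦ ENNReal.ofReal √|x|) fun _ ↦ measurable_id.abs.sqrt.ennreal_ofReal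
  calc ∫⁻ ω, ENNReal.ofReal √(σ ^ 2 * ∏ i ∈ s, U i ω) ∂P
      ≤ ∫⁻ ω, ENNReal.ofReal |σ| * ∏ i ∈ s, ENNReal.ofReal √|U i ω| ∂P := by
        refine lintegral_mono fun ω ↦ ?_
        rw [← ENNReal.ofReal_prod_of_nonneg fun i _ ↦ sqrt_nonneg _,
          ← ENNReal.ofReal_mul (abs_nonneg σ)]
        exact ENNReal.ofReal_le_ofReal (sqrt_sq_mul_prod_le_abs_mul_prod_sqrt σ s _)
    _ = ENNReal.ofReal |σ| * ∏ i ∈ s, ∫⁻ ω, ENNReal.ofReal √|U i ω| ∂P := by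
        rw [lintegral_const_mul _ (Finset.measurable_prod s fun i _ ↦ hV i),
          lintegral_prod_eq_prod_lintegral_of_indepFun s _ hVindep hV]

theorem measure_le_sqrt_sq_mul_prod_le (hUmeas : ∀ i, Measurable (U i))
    (hUindep : iIndepFun U P) {ρ : ℝ} (hρ : 0 ≤ ρ) (s : Finset ι)
    (hmoment : ∀ i ∈ s, ∫⁻ ω, ENNReal.ofReal √|U i ω| ∂P ≤ ENNReal.ofReal ρ)
    {σ ε : ℝ} (hσ : 0 ≤ σ) (hε : 0 < ε) :
    P {ω | ε ≤ √(σ ^ 2 * ∏ i ∈ s, U i ω)} ≤ ENNReal.ofReal (σ / ε * ρ ^ s.card) := by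
  have hmeas : Measurable fun ω ↦ ENNReal.ofReal √(σ ^ 2 * ∏ i ∈ s, U i ω) :=
    ((Finset.measurable_prod s fun i _ ↦ hUmeas i).const_mul _).sqrt.ennreal_ofReal
  calc P {ω | ε ≤ √(σ ^ 2 * ∏ i ∈ s, U i ω)}
      = P {ω | ENNReal.ofReal ε ≤ ENNReal.ofReal √(σ ^ 2 * ∏ i ∈ s, U i ω)} := by
        simp only [ENNReal.ofReal_le_ofReal_iff (sqrt_nonneg _)]
    _ ≤ (∫⁻ ω, ENNReal.ofReal √(σ ^ 2 * ∏ i ∈ s, U i ω) ∂P) / ENNReal.ofReal ε :=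
        meas_ge_le_lintegral_div hmeas.aemeasurable (by simpa using hε) ENNReal.ofReal_ne_top
    _ ≤ (ENNReal.ofReal σ * ∏ _i ∈ s, ENNReal.ofReal ρ) / ENNReal.ofReal ε := by
        gcongr
        calc _ ≤ ENNReal.ofReal |σ| * ∏ i ∈ s, ∫⁻ ω, ENNReal.ofReal √|U i ω| ∂P :=
              lintegral_sqrt_sq_mul_prod_le hUmeas hUindep σ s
          _ ≤ _ := by
              rw [abs_of_nonneg hσ]
              gcongr with i hi
              exact hmoment i hi
    _ = ENNReal.ofReal (σ / ε * ρ ^ s.card) := by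
        rw [Finset.prod_const, ← ENNReal.ofReal_pow hρ, ← ENNReal.ofReal_mul hσ,
          ← ENNReal.ofReal_div_of_pos hε]
        ring_nf

end

theorem gaussian_recursive_collapse_rate_general
    (n : ℕ) (hn : 3 ≤ n) (σ₀ : ℝ) (hσ₀ : 0 < σ₀)
    (Ω : Type*) [MeasurableSpace Ω] (P : Measure Ω)
    (U : ℕ → Ω → ℝ) (hUmeas : ∀ i, Measurable (U i))
    (hUindep : iIndepFun U P)
    (hUlaw : ∀ i, Measure.map (U i) P =
      volume.withDensity (fun u => ENNReal.ofReal
        (if 0 < u then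
          (((n : ℝ) - 1) / 2) ^ (((n : ℝ) - 1) / 2) / Real.Gamma (((n : ℝ) - 1) / 2) *
            u ^ (((n : ℝ) - 1) / 2 - 1) * Real.exp (-((n : ℝ) - 1) * u / 2)
         else 0)))
    (ε : ℝ) (hε : 0 < ε) (k : ℕ) :
    P {ω | ε ≤ Real.sqrt (σ₀ ^ 2 * ∏ i ∈ Finset.Icc 1 k, U i ω)}
      ≤ ENNReal.ofReal (σ₀ / ε * Real.exp (-(k : ℝ) / (4 * n - 1))) := by
  have hm : 0 < ((n : ℝ) - 1) / 2 := by
    have : (3 : ℝ) ≤ n := by exact_mod_cast hn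
    linarith
  have hmoment : ∀ i ∈ Finset.Icc 1 k,
      ∫⁻ ω, ENNReal.ofReal √|U i ω| ∂P ≤ ENNReal.ofReal (exp (-1 / (4 * n - 1))) := by
    intro i _
    rw [← lintegral_map (f := fun x ↦ ENNReal.ofReal √|x|)
        measurable_id.abs.sqrt.ennreal_ofReal (hUmeas i),
      hUlaw i, withDensity_chiSq_div_eq_gammaMeasure, lintegral_sqrt_abs_gammaMeasure hm hm]
    refine ENNReal.ofReal_le_ofReal ((div_le_iff₀ (by positivity)).2 ?_)
    calc Gamma (((n : ℝ) - 1) / 2 + 1 / 2)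
        ≤ √(((n : ℝ) - 1) / 2) * exp (-1 / (8 * (((n : ℝ) - 1) / 2) + 3)) *
            Gamma (((n : ℝ) - 1) / 2) := Gamma_add_half_le hm
      _ = _ := by ring_nf
  calc _ ≤ ENNReal.ofReal (σ₀ / ε * exp (-1 / (4 * n - 1)) ^ (Finset.Icc 1 k).card) :=
        measure_le_sqrt_sq_mul_prod_le hUmeas hUindep (exp_pos _).le _ hmoment hσ₀.le hε
    _ = _ := by
        rw [Nat.card_Icc, Nat.add_sub_cancel, ← exp_nat_mul]
        ring_nf

/-- Collapse rate for the Gaussian recursive training process: `U i` are i.i.d.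
`χ²_{n-1}/(n-1)` random variables (density `((n-1)/2)^((n-1)/2)/Γ((n-1)/2) ·
u^((n-1)/2-1) · e^(-(n-1)u/2)` on `(0,∞)`), `Σ_k² = σ₀² U 1 ⋯ U k`, and
`Pr(Σ_k ≥ ε) ≤ (σ₀/ε) exp(-k/(4n-1))`. -/
theorem gaussian_recursive_collapse_rate
    (n : ℕ) (hn : 3 ≤ n) (σ₀ : ℝ) (hσ₀ : 0 < σ₀)
    (Ω : Type*) [MeasurableSpace Ω] (P : Measure Ω) [IsProbabilityMeasure P]
    (U : ℕ → Ω → ℝ) (hUmeas : ∀ i, Measurable (U i))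
    (hUindep : iIndepFun U P)
    (hUlaw : ∀ i, Measure.map (U i) P =
      volume.withDensity (fun u => ENNReal.ofReal
        (if 0 < u then
          (((n : ℝ) - 1) / 2) ^ (((n : ℝ) - 1) / 2) / Real.Gamma (((n : ℝ) - 1) / 2) *
            u ^ (((n : ℝ) - 1) / 2 - 1) * Real.exp (-((n : ℝ) - 1) * u / 2)
         else 0)))
    (ε : ℝ) (hε : 0 < ε) (k : ℕ) (hk : 1 ≤ k) :
    P {ω | ε ≤ Real.sqrt (σ₀ ^ 2 * ∏ i ∈ Finset.Icc 1 k, U i ω)}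
      ≤ ENNReal.ofReal (σ₀ / ε * Real.exp (-(k : ℝ) / (4 * n - 1))) :=
  gaussian_recursive_collapse_rate_general n hn σ₀ hσ₀ Ω P U hUmeas hUindep hUlaw ε hε k
end

section
/- Let x_1,…,x_n be real numbers, μ̂_0 = (1/n)Σ|x_i|, σ̂_∞² = (1/n)Σ x_i², σ_s² = σ̂_∞² - μ̂_0², and for α > 0 let μ̂_α = (1/n)Σ x_i tanh(x_i/α). Then μ̂_α ≤ μ̂_0 for all α > 0, and if the equation μ̂_α = √(σ̂_∞² + α²/4) - α/2 has a solution α*, then α* ≥ σ_s²/μ̂_0 and the corresponding variance estimate σ̂² = α* μ̂_{α*} satisfies σ_s² ≤ σ̂² ≤ σ̂_∞². -/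
open Real

lemma my_abs_tanh_le_one (t : ℝ) : |Real.tanh t| ≤ 1 := by
  rw [Real.tanh_eq_sinh_div_cosh, abs_div, abs_of_pos (Real.cosh_pos t),
    div_le_one (Real.cosh_pos t)]
  nlinarith [Real.cosh_sq_sub_sinh_sq t, sq_abs (Real.sinh t), abs_nonneg (Real.sinh t),
    Real.cosh_pos t]

/-- Properties of the joint ML estimate in the Gaussian mixture model. -/
theorem gmm_joint_ml_properties (n : ℕ) (hn : 0 < n) (x : Fin n → ℝ) :
    let μ₀ : ℝ := (1 / n) * ∑ i, |x i|
    let σinfsq : ℝ := (1 / n) * ∑ i, (x i) ^ 2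
    let σssq : ℝ := σinfsq - μ₀ ^ 2
    let μhat : ℝ → ℝ := fun α => (1 / n) * ∑ i, x i * Real.tanh (x i / α)
    (∀ α : ℝ, 0 < α → μhat α ≤ μ₀) ∧
    (∀ αstar : ℝ, 0 < αstar →
      μhat αstar = Real.sqrt (σinfsq + αstar ^ 2 / 4) - αstar / 2 →
      αstar ≥ σssq / μ₀ ∧ σssq ≤ αstar * μhat αstar ∧ αstar * μhat αstar ≤ σinfsq) := by
  intro μ₀ σinfsq σssq μhat
  have hninv : (0:ℝ) ≤ 1 / n := by positivity
  have hle : ∀ α : ℝ, 0 < α → μhat α ≤ μ₀ := by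
    intro α hα
    apply mul_le_mul_of_nonneg_left _ hninv
    apply Finset.sum_le_sum
    intro i _
    calc x i * Real.tanh (x i / α) ≤ |x i * Real.tanh (x i / α)| := le_abs_self _
      _ = |x i| * |Real.tanh (x i / α)| := abs_mul _ _
      _ ≤ |x i| * 1 := by
          exact mul_le_mul_of_nonneg_left (my_abs_tanh_le_one _) (abs_nonneg _)
      _ = |x i| := mul_one _
  have hμ₀ : 0 ≤ μ₀ := by
    apply mul_nonneg hninv
    exact Finset.sum_nonneg fun i _ => abs_nonneg _
  have hσinf : 0 ≤ σinfsq := by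
    apply mul_nonneg hninv
    exact Finset.sum_nonneg fun i _ => sq_nonneg _
  refine ⟨hle, ?_⟩
  intro α hα heq
  set m := μhat α with hm
  have hmle : m ≤ μ₀ := hle α hα
  have hmnn : 0 ≤ m := by
    rw [heq]
    have h1 : α / 2 ≤ Real.sqrt (σinfsq + α ^ 2 / 4) := by
      rw [show σinfsq + α ^ 2 / 4 = σinfsq + (α/2)^2 by ring]
      calc α / 2 = Real.sqrt ((α/2)^2) := by
            rw [Real.sqrt_sq (by linarith)]
        _ ≤ _ := Real.sqrt_le_sqrt (by linarith)
    linarith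
  have hsq : (m + α / 2) ^ 2 = σinfsq + α ^ 2 / 4 := by
    have : m + α / 2 = Real.sqrt (σinfsq + α ^ 2 / 4) := by rw [heq]; ring
    rw [this, Real.sq_sqrt (by positivity)]
  have key : α * m = σinfsq - m ^ 2 := by nlinarith [hsq]
  have hm2 : m ^ 2 ≤ μ₀ ^ 2 := by nlinarith
  refine ⟨?_, by simp only [σssq]; nlinarith, by nlinarith [sq_nonneg m]⟩
  rcases eq_or_lt_of_le hμ₀ with h0 | h0
  · simp only [σssq, ← h0]
    rw [div_zero]
    linarith
  · rw [ge_iff_le, div_le_iff₀ h0]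
    simp only [σssq]
    nlinarith
end

section
/- Let μ̂_0 > 0, σ̂_∞ > 0 with μ̂_0 ≤ σ̂_∞, set σ_s² = σ̂_∞² − μ̂_0², and for a > 2 define σ̂²_{a} = a σ̂_∞² σ_s² / (a μ̂_0² + 2 σ̂_∞²) when σ̂_∞² ≤ (2a/(a−2)) μ̂_0², and σ̂²_a = σ̂_∞² otherwise. Then for any 0 ≤ κ ≤ 1, if 2σ̂_∞²/σ_s² ≤ a and (either σ̂_∞² ≤ (1+κ)μ̂_0², or a ≤ 2(1+κ)σ̂_∞²/(σ̂_∞² − (1+κ)μ̂_0²)), then σ_s² ≤ σ̂²_a ≤ (1+κ) σ_s². -/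
/-- Sandwich bound for the approximate joint ML variance estimate in the GMM. -/
theorem gmm_approx_ml_variance_sandwich
    (μ₀ σinf : ℝ) (hμ₀ : 0 < μ₀) (hσinf : 0 < σinf) (hle : μ₀ ≤ σinf)
    (σssq : ℝ) (hσs : σssq = σinf ^ 2 - μ₀ ^ 2) (hσspos : 0 < σssq)
    (a : ℝ) (ha : 2 < a)
    (σasq : ℝ)
    (hσa : σasq = if σinf ^ 2 ≤ (2 * a / (a - 2)) * μ₀ ^ 2 then
        a * σinf ^ 2 * σssq / (a * μ₀ ^ 2 + 2 * σinf ^ 2) else σinf ^ 2)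
    (κ : ℝ) (hκ0 : 0 ≤ κ) (hκ1 : κ ≤ 1)
    (halow : 2 * σinf ^ 2 / σssq ≤ a)
    (haup : σinf ^ 2 ≤ (1 + κ) * μ₀ ^ 2 ∨
      a ≤ 2 * (1 + κ) * σinf ^ 2 / (σinf ^ 2 - (1 + κ) * μ₀ ^ 2)) :
    σssq ≤ σasq ∧ σasq ≤ (1 + κ) * σssq := by
  have hS : 0 < σinf ^ 2 := by positivity
  have hM : 0 < μ₀ ^ 2 := by positivity
  have ha0 : 0 < a := by linarith
  have ha2 : 0 < a - 2 := by linarith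
  have hlow : 2 * σinf ^ 2 ≤ a * σssq := by
    rw [div_le_iff₀ hσspos] at halow; linarith
  -- unified form of haup
  have haup' : σinf ^ 2 ≤ (1 + κ) * μ₀ ^ 2 ∨
      (0 < σinf ^ 2 - (1 + κ) * μ₀ ^ 2 ∧
        a * (σinf ^ 2 - (1 + κ) * μ₀ ^ 2) ≤ 2 * (1 + κ) * σinf ^ 2) := by
    rcases haup with h | h
    · exact Or.inl h
    · by_cases hD : 0 < σinf ^ 2 - (1 + κ) * μ₀ ^ 2
      · right
        exact ⟨hD, by rwa [le_div_iff₀ hD] at h⟩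
      · left; push_neg at hD; linarith
  by_cases hc : σinf ^ 2 ≤ (2 * a / (a - 2)) * μ₀ ^ 2
  · rw [hσa, if_pos hc]
    have hden : 0 < a * μ₀ ^ 2 + 2 * σinf ^ 2 := by positivity
    constructor
    · rw [le_div_iff₀ hden]
      nlinarith [mul_pos hσspos hM, mul_le_mul_of_nonneg_left hlow hσspos.le]
    · rw [div_le_iff₀ hden]
      rcases haup' with h | ⟨hD, h⟩
      · nlinarith [mul_le_mul_of_nonneg_left h (mul_pos ha0 hσspos).le,
          mul_nonneg (mul_nonneg (by linarith : (0:ℝ) ≤ 1 + κ) hσspos.le) hS.le]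
      · nlinarith [mul_le_mul_of_nonneg_left h hσspos.le]
  · rw [hσa, if_neg hc]
    push_neg at hc
    rw [div_mul_eq_mul_div, div_lt_iff₀ ha2] at hc
    constructor
    · nlinarith
    · -- need (1+κ)μ₀² ≤ κ σinf²
      rcases haup' with h | ⟨hD, h⟩
      · -- contradiction: 2aM < (a-2)S ≤ (a-2)(1+κ)M ≤ 2(a-2)M
        nlinarith [mul_le_mul_of_nonneg_left h ha2.le, mul_pos hM ha2]
      · by_contra hgoal
        push_neg at hgoal
        rw [hσs] at hgoal
        -- hgoal : (1+κ)(S - M) < S, i.e. (1+κ)M > κS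
        nlinarith [mul_le_mul_of_nonneg_left h (by linarith : (0:ℝ) ≤ 1 + κ),
          mul_lt_mul_of_pos_left hc (by linarith : (0:ℝ) < 1 + κ),
          mul_pos hS ha0, mul_pos hS hM]
end
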